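/- arXiv:2208.05876 — 10 statements merged into one kernel-verified Lean document; each statement's English description precedes it below -/
import Mathlib

section
/- Let 1 ≤ r ≤ ∞ and let f : ℝⁿ × ℝᵐ → ℝ^q be a C^r map with f(x, 0) = 0 for all x ∈ ℝⁿ. Define g̃ : ℝ × ℝⁿ × ℝᵐ → ℝ^q by g̃(τ, x, v) = Σ_{i=1}^{m} vᵢ · ∫_0^1 (∂f/∂vᵢ)(x, s·τ·v) ds. Then: (a) g̃ is C^{r−1}; (b) f(x, τ·v) = τ · g̃(τ, x, v) for all τ ∈ ℝ, x ∈ ℝⁿ, v ∈ ℝᵐ; in particular g̃(1, x, v) = f(x, v) and g̃(τ, x, v) = f(x, τv)/τ for τ ≠ 0; (c) g̃(0, x, v) = Σ_{i=1}^{m} vᵢ · (∂f/∂vᵢ)(x, 0), so for each x the map v ↦ g̃(0, x, v) is linear; (d) for every τ ∈ ℝ, x ∈ ℝⁿ and i = 1,…,m, the partial derivative of g̃ in the variable vᵢ at the point (τ, x, 0) equals (∂f/∂vᵢ)(x, 0). -/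
/-! Write `g̃(τ, x, v) = A(τ, x, v) v` with `A(τ, x, v) = ∫₀¹ ∂_v f(x, sτv) ds`. The fundamental
theorem of calculus along `s ↦ (x, sτv)` gives `f(x, τv) - f(x, 0) = τ A(τ, x, v) v`, and
differentiation under the integral sign shows that `A` is `C^{r-1}`. Since
`A(τ, x, 0) = ∂_v f(x, 0)`, continuity of `A` alone yields the derivative of `w ↦ A(τ, x, w) w`
at `0`. -/

open MeasureTheory Filter Topology Set

universe u

theorem IsCompact.exists_eventually_forall_norm_le {X Y F : Type*} [TopologicalSpace X]
    [TopologicalSpace Y] [NormedAddCommGroup F] {K : Set Y} (hK : IsCompact K)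
    {h : X × Y → F} (hh : Continuous h) (x₀ : X) :
    ∃ C, ∀ᶠ x in 𝓝 x₀, ∀ y ∈ K, ‖h (x, y)‖ ≤ C := by
  obtain ⟨C, hC⟩ :=
    hK.exists_bound_of_continuousOn (hh.comp (Continuous.prodMk_right x₀)).continuousOn
  refine ⟨C + 1, hK.eventually_forall_of_forall_eventually fun y hy => ?_⟩
  have hlt : ‖h (x₀, y)‖ < C + 1 := by linarith [show ‖h (x₀, y)‖ ≤ C from hC y hy]
  exact (hh.norm.continuousAt.eventually_lt continuousAt_const hlt).mono fun z hz => hz.le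

theorem hasFDerivAt_parametric_intervalIntegral_of_contDiff {P F : Type*}
    [NormedAddCommGroup P] [NormedSpace ℝ P] [NormedAddCommGroup F] [NormedSpace ℝ F]
    {h : P × ℝ → F} (hh : ContDiff ℝ 1 h) (a b : ℝ) (x₀ : P) :
    HasFDerivAt (fun x => ∫ s in a..b, h (x, s))
      (∫ s in a..b, fderiv ℝ h (x₀, s) ∘L ContinuousLinearMap.inl ℝ P ℝ) x₀ := by
  have hcont : Continuous fun z : P × ℝ => fderiv ℝ h z ∘L ContinuousLinearMap.inl ℝ P ℝ :=
    (hh.continuous_fderiv one_ne_zero).clm_comp continuous_const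
  obtain ⟨C, hC⟩ := isCompact_uIcc.exists_eventually_forall_norm_le hcont x₀
  refine intervalIntegral.hasFDerivAt_integral_of_dominated_of_fderiv_le (μ := volume)
    (F' := fun x s => fderiv ℝ h (x, s) ∘L ContinuousLinearMap.inl ℝ P ℝ)
    (bound := fun _ => C) hC ?_ ?_ ?_ ?_ intervalIntegrable_const ?_
  · exact Eventually.of_forall fun x =>
      (hh.continuous.comp (Continuous.prodMk_right x)).aestronglyMeasurable
  · exact (hh.continuous.comp (Continuous.prodMk_right x₀)).intervalIntegrable a b
  · exact (hcont.comp (Continuous.prodMk_right x₀)).aestronglyMeasurable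
  · exact Eventually.of_forall fun s hs x hx => hx s (uIoc_subset_uIcc hs)
  · exact Eventually.of_forall fun s _ x _ =>
      (hh.differentiable one_ne_zero (x, s)).hasFDerivAt.comp x (hasFDerivAt_prodMk_left x s)

-- The induction passes from `F` to `P →L[ℝ] F`, hence the common universe.
theorem contDiff_parametric_intervalIntegral_of_contDiff_nat {P F : Type u}
    [NormedAddCommGroup P] [NormedSpace ℝ P] [NormedAddCommGroup F] [NormedSpace ℝ F]
    [CompleteSpace F] (k : ℕ) {h : P × ℝ → F} (hh : ContDiff ℝ k h) (a b : ℝ) :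
    ContDiff ℝ k fun x => ∫ s in a..b, h (x, s) := by
  induction k generalizing F with
  | zero =>
    have hcont : Continuous h := contDiff_zero.1 hh
    exact contDiff_zero.2 (by fun_prop)
  | succ k ih =>
    rw [Nat.cast_add_one, contDiff_succ_iff_hasFDerivAt]
    refine ⟨_, ih (h := fun z => fderiv ℝ h z ∘L ContinuousLinearMap.inl ℝ P ℝ) ?_,
      hasFDerivAt_parametric_intervalIntegral_of_contDiff (hh.of_le ?_) a b⟩
    · exact (hh.fderiv_right le_rfl).clm_comp contDiff_const
    · exact_mod_cast Nat.le_add_left 1 k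

theorem contDiff_parametric_intervalIntegral_of_contDiff {P F : Type u}
    [NormedAddCommGroup P] [NormedSpace ℝ P] [NormedAddCommGroup F] [NormedSpace ℝ F]
    [CompleteSpace F] {k : ℕ∞} {h : P × ℝ → F} (hh : ContDiff ℝ k h) (a b : ℝ) :
    ContDiff ℝ k fun x => ∫ s in a..b, h (x, s) := by
  cases k with
  | top =>
    rw [contDiff_infty] at hh ⊢
    exact fun j => contDiff_parametric_intervalIntegral_of_contDiff_nat j (hh j) a b
  | coe k => exact contDiff_parametric_intervalIntegral_of_contDiff_nat k hh a b

theorem sum_smul_map_single {ι R M G : Type*} [Fintype ι] [DecidableEq ι] [CommSemiring R]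
    [AddCommMonoid M] [Module R M] [FunLike G (ι → R) M] [LinearMapClass G R (ι → R) M]
    (L : G) (v : ι → R) : ∑ i, v i • L (Pi.single i 1) = L v := by
  conv_rhs => rw [pi_eq_sum_univ' v, map_sum]
  simp only [map_smul]

section FDeriv

variable {E V F : Type*} [NormedAddCommGroup E] [NormedSpace ℝ E] [NormedAddCommGroup V]
  [NormedSpace ℝ V] [NormedAddCommGroup F] [NormedSpace ℝ F]

theorem fderiv_comp_prodMk_right {f : E × V → F} {x : E} {y : V}
    (hf : DifferentiableAt ℝ f (x, y)) :
    fderiv ℝ (fun w => f (x, w)) y = fderiv ℝ f (x, y) ∘L ContinuousLinearMap.inr ℝ E V :=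
  (hf.hasFDerivAt.comp y (hasFDerivAt_prodMk_right x y)).fderiv

theorem contDiff_fderiv_comp_prodMk_right {f : E × V → F} {k r : WithTop ℕ∞}
    (hf : ContDiff ℝ r f) (hk : k + 1 ≤ r) :
    ContDiff ℝ k fun p : E × V => fderiv ℝ (fun w => f (p.1, w)) p.2 := by
  have hdiff : Differentiable ℝ f :=
    hf.differentiable (ENat.one_le_iff_ne_zero_withTop.mp (le_add_self.trans hk))
  have hpartial : (fun p : E × V => fderiv ℝ (fun w => f (p.1, w)) p.2) =
      fun p => fderiv ℝ f p ∘L ContinuousLinearMap.inr ℝ E V :=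
    funext fun p => fderiv_comp_prodMk_right (hdiff p)
  rw [hpartial]
  exact (hf.fderiv_right hk).clm_comp contDiff_const

theorem hasFDerivAt_apply_self_zero {A : V → V →L[ℝ] F} (hA : ContinuousAt A 0) :
    HasFDerivAt (fun w => A w w) (A 0) 0 := by
  rw [hasFDerivAt_iff_isLittleO_nhds_zero]
  simp only [zero_add, map_zero, sub_zero]
  refine Asymptotics.isLittleO_iff.2 fun c hc => ?_
  filter_upwards [hA.eventually (Metric.ball_mem_nhds _ hc)] with w hw
  calc ‖A w w - A 0 w‖ = ‖(A w - A 0) w‖ := rfl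
    _ ≤ ‖A w - A 0‖ * ‖w‖ := (A w - A 0).le_opNorm w
    _ ≤ c * ‖w‖ := by gcongr; exact (mem_ball_iff_norm.1 hw).le

theorem sub_eq_intervalIntegral_fderiv_apply [CompleteSpace F] {h : V → F} (hh : ContDiff ℝ 1 h)
    (v : V) : h v - h 0 = (∫ s in (0:ℝ)..1, fderiv ℝ h (s • v)) v := by
  have hcont : Continuous fun s : ℝ => fderiv ℝ h (s • v) :=
    (hh.continuous_fderiv one_ne_zero).comp (continuous_id.smul continuous_const)
  have hderiv (s : ℝ) : HasDerivAt (fun s : ℝ => h (s • v)) (fderiv ℝ h (s • v) v) s := by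
    have := (hh.differentiable one_ne_zero (s • v)).hasFDerivAt.comp_hasDerivAt s
      ((hasDerivAt_id s).smul_const v)
    simpa [Function.comp_def] using this
  rw [ContinuousLinearMap.intervalIntegral_apply (hcont.intervalIntegrable 0 1),
    intervalIntegral.integral_eq_sub_of_hasDerivAt (fun s _ => hderiv s)
      ((hcont.clm_apply continuous_const).intervalIntegrable 0 1)]
  simp

end FDeriv

section HadamardOperator

variable {E V F : Type u} [NormedAddCommGroup V] [NormedSpace ℝ V] [NormedAddCommGroup F]
  [NormedSpace ℝ F] [CompleteSpace F]

noncomputable def hadamardOperator (f : E × V → F) (τ : ℝ) (x : E) (v : V) : V →L[ℝ] F :=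
  ∫ s in (0:ℝ)..1, fderiv ℝ (fun w => f (x, w)) (s • τ • v)

theorem hadamardOperator_zero_left (f : E × V → F) (x : E) (v : V) :
    hadamardOperator f 0 x v = fderiv ℝ (fun w => f (x, w)) 0 := by
  simp [hadamardOperator]

theorem hadamardOperator_zero_right (f : E × V → F) (τ : ℝ) (x : E) :
    hadamardOperator f τ x 0 = fderiv ℝ (fun w => f (x, w)) 0 := by
  simp [hadamardOperator]

variable [NormedAddCommGroup E] [NormedSpace ℝ E]

theorem sub_eq_smul_hadamardOperator_apply {f : E × V → F} (hf : ContDiff ℝ 1 f) (τ : ℝ) (x : E)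
    (v : V) : f (x, τ • v) - f (x, 0) = τ • hadamardOperator f τ x v v := by
  rw [hadamardOperator, ← ContinuousLinearMap.map_smul,
    sub_eq_intervalIntegral_fderiv_apply (h := fun w => f (x, w)) (by fun_prop)]

theorem contDiff_hadamardOperator {f : E × V → F} {k : ℕ∞} {r : WithTop ℕ∞}
    (hf : ContDiff ℝ r f) (hk : (k : WithTop ℕ∞) + 1 ≤ r) :
    ContDiff ℝ k fun p : ℝ × E × V => hadamardOperator f p.1 p.2.1 p.2.2 := by
  have hpath : ContDiff ℝ k fun z : (ℝ × E × V) × ℝ => (z.1.2.1, z.2 • z.1.1 • z.1.2.2) := by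
    fun_prop
  exact contDiff_parametric_intervalIntegral_of_contDiff
    ((contDiff_fderiv_comp_prodMk_right hf hk).comp hpath) 0 1

end HadamardOperator

theorem hadamard_lemma_parametrized_general
    {n m q : ℕ}
    (r : ℕ∞) (hr : 1 ≤ r)
    (f : ((Fin n → ℝ) × (Fin m → ℝ)) → (Fin q → ℝ))
    (hf : ContDiff ℝ r f)
    (hf0 : ∀ x : Fin n → ℝ, f (x, 0) = 0)
    (g : ℝ → (Fin n → ℝ) → (Fin m → ℝ) → (Fin q → ℝ))
    (hg : ∀ (τ : ℝ) (x : Fin n → ℝ) (v : Fin m → ℝ),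
      g τ x v = ∑ i : Fin m, v i •
        ∫ s in (0:ℝ)..1,
          fderiv ℝ (fun w : Fin m → ℝ => f (x, w)) (s • (τ • v)) (Pi.single i 1)) :
    ContDiff ℝ (r - 1) (fun p : ℝ × (Fin n → ℝ) × (Fin m → ℝ) => g p.1 p.2.1 p.2.2)
    ∧ (∀ (τ : ℝ) (x : Fin n → ℝ) (v : Fin m → ℝ), f (x, τ • v) = τ • g τ x v)
    ∧ (∀ (x : Fin n → ℝ) (v : Fin m → ℝ), g 1 x v = f (x, v))
    ∧ (∀ (τ : ℝ) (x : Fin n → ℝ) (v : Fin m → ℝ), τ ≠ 0 → g τ x v = τ⁻¹ • f (x, τ • v))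
    ∧ (∀ (x : Fin n → ℝ) (v : Fin m → ℝ),
        g 0 x v = ∑ i : Fin m, v i •
          fderiv ℝ (fun w : Fin m → ℝ => f (x, w)) 0 (Pi.single i 1))
    ∧ (∀ x : Fin n → ℝ, IsLinearMap ℝ (g 0 x))
    ∧ (∀ (τ : ℝ) (x : Fin n → ℝ) (i : Fin m),
        fderiv ℝ (fun w : Fin m → ℝ => g τ x w) 0 (Pi.single i 1)
          = fderiv ℝ (fun w : Fin m → ℝ => f (x, w)) 0 (Pi.single i 1)) := by
  have hf1 : ContDiff ℝ 1 f := hf.of_le (by exact_mod_cast hr)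
  have hA : ContDiff ℝ (r - 1) fun p : ℝ × (Fin n → ℝ) × (Fin m → ℝ) =>
      hadamardOperator f p.1 p.2.1 p.2.2 :=
    contDiff_hadamardOperator hf (by exact_mod_cast (tsub_add_cancel_of_le hr).le)
  have hgA (τ x v) : g τ x v = hadamardOperator f τ x v v := by
    have hpath : Continuous fun s : ℝ => (x, s • τ • v) := by fun_prop
    have hcont : Continuous fun s : ℝ => fderiv ℝ (fun w => f (x, w)) (s • τ • v) :=
      (contDiff_fderiv_comp_prodMk_right (k := 0) hf1 (by norm_num)).continuous.comp hpath
    rw [hg, hadamardOperator, ← sum_smul_map_single]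
    simp only [ContinuousLinearMap.intervalIntegral_apply (hcont.intervalIntegrable 0 1)]
  have hfg (τ x v) : f (x, τ • v) = τ • g τ x v := by
    rw [hgA, ← sub_eq_smul_hadamardOperator_apply hf1, hf0, sub_zero]
  have hg0 (x) : g 0 x = fderiv ℝ (fun w => f (x, w)) 0 :=
    funext fun v => by rw [hgA, hadamardOperator_zero_left]
  refine ⟨?_, hfg, fun x v => by simpa using (hfg 1 x v).symm,
    fun τ x v hτ => by rw [hfg, smul_smul, inv_mul_cancel₀ hτ, one_smul],
    fun x v => by rw [hg0, sum_smul_map_single], fun x => hg0 x ▸ LinearMap.isLinear _,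
    fun τ x i => ?_⟩
  · simp_rw [hgA]
    exact hA.clm_apply (by fun_prop)
  · have hgτ : HasFDerivAt (fun w => g τ x w) (hadamardOperator f τ x 0) 0 := by
      simp_rw [hgA]
      have hfiber : Continuous fun w : Fin m → ℝ => (τ, x, w) := by fun_prop
      exact hasFDerivAt_apply_self_zero (hA.continuous.comp hfiber).continuousAt
    rw [hgτ.fderiv, hadamardOperator_zero_right]

/-- Parametrized Hadamard lemma: for a `C^r` map `f : ℝⁿ × ℝᵐ → ℝ^q` vanishing on the zero
section, the map `g̃(τ, x, v) = Σᵢ vᵢ ∫_0^1 ∂f/∂vᵢ(x, sτv) ds` is `C^{r-1}`, satisfies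
`f(x, τv) = τ g̃(τ, x, v)`, is linear in `v` at `τ = 0`, and its fiber partial derivatives at the
zero section coincide with those of `f`. -/
theorem hadamard_lemma_parametrized
    {n m q : ℕ} (hn : 0 < n) (hm : 0 < m) (hq : 0 < q)
    (r : ℕ∞) (hr : 1 ≤ r)
    (f : ((Fin n → ℝ) × (Fin m → ℝ)) → (Fin q → ℝ))
    (hf : ContDiff ℝ r f)
    (hf0 : ∀ x : Fin n → ℝ, f (x, 0) = 0)
    (g : ℝ → (Fin n → ℝ) → (Fin m → ℝ) → (Fin q → ℝ))
    (hg : ∀ (τ : ℝ) (x : Fin n → ℝ) (v : Fin m → ℝ),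
      g τ x v = ∑ i : Fin m, v i •
        ∫ s in (0:ℝ)..1,
          fderiv ℝ (fun w : Fin m → ℝ => f (x, w)) (s • (τ • v)) (Pi.single i 1)) :
    ContDiff ℝ (r - 1) (fun p : ℝ × (Fin n → ℝ) × (Fin m → ℝ) => g p.1 p.2.1 p.2.2)
    ∧ (∀ (τ : ℝ) (x : Fin n → ℝ) (v : Fin m → ℝ), f (x, τ • v) = τ • g τ x v)
    ∧ (∀ (x : Fin n → ℝ) (v : Fin m → ℝ), g 1 x v = f (x, v))
    ∧ (∀ (τ : ℝ) (x : Fin n → ℝ) (v : Fin m → ℝ), τ ≠ 0 → g τ x v = τ⁻¹ • f (x, τ • v))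
    ∧ (∀ (x : Fin n → ℝ) (v : Fin m → ℝ),
        g 0 x v = ∑ i : Fin m, v i •
          fderiv ℝ (fun w : Fin m → ℝ => f (x, w)) 0 (Pi.single i 1))
    ∧ (∀ x : Fin n → ℝ, IsLinearMap ℝ (g 0 x))
    ∧ (∀ (τ : ℝ) (x : Fin n → ℝ) (i : Fin m),
        fderiv ℝ (fun w : Fin m → ℝ => g τ x w) 0 (Pi.single i 1)
          = fderiv ℝ (fun w : Fin m → ℝ => f (x, w)) 0 (Pi.single i 1)) :=
  hadamard_lemma_parametrized_general r hr f hf hf0 g hg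
end

section
/- Let h = (a, b) : ℝⁿ × ℝᵐ → ℝ^p × ℝ^q be a C^∞ map with b(x, 0) = 0 for all x ∈ ℝⁿ. Then there exists a unique continuous map α : ℝ × ℝⁿ × ℝᵐ → ℝ^p × ℝ^q such that α(τ, x, v) = ( a(x, τ·v), b(x, τ·v)/τ ) for all τ ≠ 0. Moreover this α is C^∞ and satisfies: (a) α(1, x, v) = h(x, v); (b) α(τ, x, 0) = (a(x, 0), 0) = h(x, 0) for all τ ∈ ℝ; (c) α(0, x, v) = ( a(x, 0), S_x(v) ), where S_x : ℝᵐ → ℝ^q is the Fréchet derivative at 0 of the map v ↦ b(x, v); in particular v ↦ α(0, x, v) is the fiberwise-linear map determined by the derivative of b along the fibers at the zero section. -/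
/-!
Since `b` vanishes on the zero section, the fundamental theorem of calculus along the ray
`s ↦ (x, s • τ • v)` gives `b (x, τ • v) = τ • ∫₀¹ ∂b(x, (s * τ) • v) (0, v) ds`. The integral
is smooth in `(τ, x, v)` by differentiation under the integral sign, and at `τ = 0` it is the fiber
derivative `∂b(x, 0) (0, v)`; so it is the second component of `α`. Uniqueness holds because
`{τ ≠ 0}` is dense.
-/

open intervalIntegral Set Metric
open scoped ContDiff

-- One universe for both spaces: the induction below replaces `F` by `E →L[ℝ] F`.
universe u

section ParametricIntegral

variable {E F : Type u} [NormedAddCommGroup E] [NormedSpace ℝ E] [ProperSpace E]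
  [NormedAddCommGroup F] [NormedSpace ℝ F]

theorem hasFDerivAt_intervalIntegral_of_contDiff {f : E × ℝ → F} (hf : ContDiff ℝ 1 f)
    (a b : ℝ) (x₀ : E) :
    HasFDerivAt (fun x => ∫ s in a..b, f (x, s))
      (∫ s in a..b, fderiv ℝ f (x₀, s) ∘L ContinuousLinearMap.inl ℝ E ℝ) x₀ := by
  have hD : Continuous fun z => fderiv ℝ f z ∘L ContinuousLinearMap.inl ℝ E ℝ :=
    (hf.continuous_fderiv one_ne_zero).clm_comp continuous_const
  have hf_slice (x : E) : Continuous fun s => f (x, s) := by fun_prop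
  obtain ⟨C, hC⟩ := ((isCompact_closedBall x₀ 1).prod (isCompact_uIcc (a := a) (b := b))
    ).exists_bound_of_continuousOn hD.continuousOn
  refine hasFDerivAt_integral_of_dominated_of_fderiv_le (bound := fun _ => C)
    (F' := fun x s => fderiv ℝ f (x, s) ∘L ContinuousLinearMap.inl ℝ E ℝ)
    (ball_mem_nhds x₀ one_pos) (.of_forall fun x => (hf_slice x).aestronglyMeasurable)
    ((hf_slice x₀).intervalIntegrable _ _)
    (hD.comp (Continuous.prodMk_right x₀)).aestronglyMeasurable ?_ intervalIntegrable_const ?_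
  · exact .of_forall fun s hs x hx =>
      hC (x, s) ⟨ball_subset_closedBall hx, uIoc_subset_uIcc hs⟩
  · exact .of_forall fun s _ x _ =>
      (hf.differentiable one_ne_zero (x, s)).hasFDerivAt.comp x (hasFDerivAt_prodMk_left x s)

theorem contDiff_intervalIntegral_of_contDiff {k : ℕ∞} {f : E × ℝ → F}
    (hf : ContDiff ℝ k f) (a b : ℝ) : ContDiff ℝ k fun x => ∫ s in a..b, f (x, s) := by
  suffices ∀ (N : ℕ) {G : Type u} [NormedAddCommGroup G] [NormedSpace ℝ G]
      {g : E × ℝ → G}, ContDiff ℝ N g → ContDiff ℝ N fun x => ∫ s in a..b, g (x, s) by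
    cases k with
    | top => exact contDiff_infty.2 fun N => this N (hf.of_le (WithTop.coe_le_coe.2 le_top))
    | coe N => exact this N hf
  intro N
  induction N with
  | zero =>
    intro G _ _ g hg
    exact contDiff_zero.2 <| continuous_parametric_intervalIntegral_of_continuous'
      (f := fun x s => g (x, s)) hg.continuous a b
  | succ N ih =>
    intro G _ _ g hg
    have hderiv := hasFDerivAt_intervalIntegral_of_contDiff
      (hg.of_le (by exact_mod_cast Nat.le_add_left 1 N)) a b
    rw [Nat.cast_succ, contDiff_succ_iff_fderiv]
    refine ⟨fun x => (hderiv x).differentiableAt, by simp, ?_⟩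
    rw [funext fun x => (hderiv x).fderiv]
    exact ih ((hg.fderiv_right le_rfl).clm_comp contDiff_const)

end ParametricIntegral

section Hadamard

variable {E V F : Type u} [NormedAddCommGroup E] [NormedSpace ℝ E]
  [NormedAddCommGroup V] [NormedSpace ℝ V] [NormedAddCommGroup F] [NormedSpace ℝ F]

/-- `b (x, τ • v) / τ`, extended smoothly across `τ = 0` when `b` vanishes on the zero section. -/
noncomputable def hadamardQuotient (b : E × V → F) (z : ℝ × E × V) : F :=
  ∫ s in (0 : ℝ)..1, fderiv ℝ b (z.2.1, (s * z.1) • z.2.2) (0, z.2.2)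

@[simp]
theorem hadamardQuotient_zero_scale [CompleteSpace F] (b : E × V → F) (x : E) (v : V) :
    hadamardQuotient b (0, x, v) = fderiv ℝ b (x, 0) (0, v) := by
  simp [hadamardQuotient]

@[simp]
theorem hadamardQuotient_zero_vector (b : E × V → F) (τ : ℝ) (x : E) :
    hadamardQuotient b (τ, x, 0) = 0 := by
  simp [hadamardQuotient, Prod.mk_zero_zero]

theorem integral_fderiv_fiber_eq [CompleteSpace F] {b : E × V → F} (hb : ContDiff ℝ 1 b)
    (hb0 : ∀ x, b (x, 0) = 0) (x : E) (w : V) :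
    ∫ s in (0 : ℝ)..1, fderiv ℝ b (x, s • w) (0, w) = b (x, w) := by
  have hderiv (s : ℝ) :
      HasDerivAt (fun s : ℝ => b (x, s • w)) (fderiv ℝ b (x, s • w) (0, w)) s := by
    have hline : HasDerivAt (fun s : ℝ => (x, s • w)) ((0 : E), w) s := by
      simpa using (hasDerivAt_const s x).prodMk ((hasDerivAt_id s).smul_const w)
    exact (hb.differentiable one_ne_zero _).hasFDerivAt.comp_hasDerivAt s hline
  have hcont : Continuous fun s : ℝ => fderiv ℝ b (x, s • w) (0, w) :=
    (hb.continuous_fderiv one_ne_zero).clm_apply continuous_const |>.comp (by fun_prop)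
  rw [integral_eq_sub_of_hasDerivAt (fun s _ => hderiv s) (hcont.intervalIntegrable _ _)]
  simp [hb0]

theorem smul_hadamardQuotient [CompleteSpace F] {b : E × V → F} (hb : ContDiff ℝ 1 b)
    (hb0 : ∀ x, b (x, 0) = 0) (τ : ℝ) (x : E) (v : V) :
    τ • hadamardQuotient b (τ, x, v) = b (x, τ • v) := by
  rw [← integral_fderiv_fiber_eq hb hb0, hadamardQuotient, ← intervalIntegral.integral_smul]
  congr 1 with s
  rw [smul_smul, ← map_smul, Prod.smul_mk, smul_zero]

theorem contDiff_hadamardQuotient [ProperSpace E] [ProperSpace V] {k : ℕ∞} {b : E × V → F}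
    (hb : ContDiff ℝ (k + 1 : ℕ∞) b) : ContDiff ℝ k (hadamardQuotient b) := by
  have hb' : ContDiff ℝ k (fderiv ℝ b) := hb.fderiv_right (by exact_mod_cast le_rfl)
  have hline : ContDiff ℝ k fun zs : (ℝ × E × V) × ℝ =>
      (zs.1.2.1, (zs.2 * zs.1.1) • zs.1.2.2) := by fun_prop
  have hdir : ContDiff ℝ k fun zs : (ℝ × E × V) × ℝ => ((0 : E), zs.1.2.2) := by fun_prop
  exact contDiff_intervalIntegral_of_contDiff ((hb'.comp hline).clm_apply hdir) 0 1

end Hadamard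

theorem hadamard_lemma_vector_bundles_general
    {n m p q : ℕ}
    (a : ((Fin n → ℝ) × (Fin m → ℝ)) → (Fin p → ℝ))
    (b : ((Fin n → ℝ) × (Fin m → ℝ)) → (Fin q → ℝ))
    (hab : ContDiff ℝ (⊤ : ℕ∞) (fun z => (a z, b z)))
    (hb0 : ∀ x : Fin n → ℝ, b (x, 0) = 0) :
    (∃! α : ℝ × (Fin n → ℝ) × (Fin m → ℝ) → (Fin p → ℝ) × (Fin q → ℝ),
        Continuous α ∧
        ∀ (τ : ℝ), τ ≠ 0 → ∀ (x : Fin n → ℝ) (v : Fin m → ℝ),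
          α (τ, x, v) = (a (x, τ • v), τ⁻¹ • b (x, τ • v)))
    ∧ ∀ α : ℝ × (Fin n → ℝ) × (Fin m → ℝ) → (Fin p → ℝ) × (Fin q → ℝ),
        Continuous α →
        (∀ (τ : ℝ), τ ≠ 0 → ∀ (x : Fin n → ℝ) (v : Fin m → ℝ),
          α (τ, x, v) = (a (x, τ • v), τ⁻¹ • b (x, τ • v))) →
        ContDiff ℝ (⊤ : ℕ∞) α
        ∧ (∀ (x : Fin n → ℝ) (v : Fin m → ℝ), α (1, x, v) = (a (x, v), b (x, v)))
        ∧ (∀ (τ : ℝ) (x : Fin n → ℝ), α (τ, x, 0) = (a (x, 0), 0))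
        ∧ (∀ (x : Fin n → ℝ) (v : Fin m → ℝ),
            α (0, x, v) = (a (x, 0), fderiv ℝ (fun w : Fin m → ℝ => b (x, w)) 0 v)) := by
  have ha : ContDiff ℝ ∞ a := contDiff_fst.comp hab
  have hb : ContDiff ℝ ∞ b := contDiff_snd.comp hab
  set α₀ : ℝ × (Fin n → ℝ) × (Fin m → ℝ) → (Fin p → ℝ) × (Fin q → ℝ) :=
    fun z => (a (z.2.1, z.1 • z.2.2), hadamardQuotient b z)
  have hα₀_smooth : ContDiff ℝ ∞ α₀ :=
    (ha.comp (by fun_prop)).prodMk (contDiff_hadamardQuotient (k := ⊤) (by simpa using hb))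
  have hα₀_eq (τ : ℝ) (hτ : τ ≠ 0) (x : Fin n → ℝ) (v : Fin m → ℝ) :
      α₀ (τ, x, v) = (a (x, τ • v), τ⁻¹ • b (x, τ • v)) := by
    rw [← smul_hadamardQuotient (hb.of_le (by simp)) hb0, inv_smul_smul₀ hτ]
  have huniq (α : ℝ × (Fin n → ℝ) × (Fin m → ℝ) → (Fin p → ℝ) × (Fin q → ℝ))
      (hα : Continuous α)
      (hα_eq : ∀ τ, τ ≠ 0 → ∀ x v, α (τ, x, v) = (a (x, τ • v), τ⁻¹ • b (x, τ • v))) :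
      α = α₀ :=
    hα.ext_on ((dense_compl_singleton 0).preimage isOpenMap_fst) hα₀_smooth.continuous
      fun ⟨τ, x, v⟩ hτ => (hα_eq τ hτ x v).trans (hα₀_eq τ hτ x v).symm
  refine ⟨⟨α₀, ⟨hα₀_smooth.continuous, hα₀_eq⟩, fun α hα => huniq α hα.1 hα.2⟩, ?_⟩
  rintro α hα hα_eq
  obtain rfl := huniq α hα hα_eq
  have hfiber (x : Fin n → ℝ) :
      fderiv ℝ (fun w => b (x, w)) 0 = fderiv ℝ b (x, 0) ∘L .inr ℝ _ _ :=
    ((hb.differentiable (by simp) _).hasFDerivAt.comp 0 (hasFDerivAt_prodMk_right x 0)).fderiv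
  exact ⟨hα₀_smooth, fun x v => by simpa using hα₀_eq 1 one_ne_zero x v,
    fun τ x => by simp [α₀], fun x v => by simp [α₀, hfiber]⟩

/-- Hadamard lemma for (trivialized) vector bundles: given a smooth map
`h = (a, b) : ℝⁿ × ℝᵐ → ℝ^p × ℝ^q` sending the zero section to the zero section, there is a
unique continuous map `α(τ, x, v)` equal to `(a(x, τv), b(x, τv)/τ)` for `τ ≠ 0`; moreover `α`
is smooth, `α(1, x, v) = h(x, v)`, `α(τ, x, 0) = h(x, 0)`, and `α(0, x, v)` is the fiberwise
derivative of `b` at the zero section. -/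
theorem hadamard_lemma_vector_bundles
    {n m p q : ℕ} (hn : 0 < n) (hm : 0 < m) (hp : 0 < p) (hq : 0 < q)
    (a : ((Fin n → ℝ) × (Fin m → ℝ)) → (Fin p → ℝ))
    (b : ((Fin n → ℝ) × (Fin m → ℝ)) → (Fin q → ℝ))
    (hab : ContDiff ℝ (⊤ : ℕ∞) (fun z => (a z, b z)))
    (hb0 : ∀ x : Fin n → ℝ, b (x, 0) = 0) :
    (∃! α : ℝ × (Fin n → ℝ) × (Fin m → ℝ) → (Fin p → ℝ) × (Fin q → ℝ),
        Continuous α ∧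
        ∀ (τ : ℝ), τ ≠ 0 → ∀ (x : Fin n → ℝ) (v : Fin m → ℝ),
          α (τ, x, v) = (a (x, τ • v), τ⁻¹ • b (x, τ • v)))
    ∧ ∀ α : ℝ × (Fin n → ℝ) × (Fin m → ℝ) → (Fin p → ℝ) × (Fin q → ℝ),
        Continuous α →
        (∀ (τ : ℝ), τ ≠ 0 → ∀ (x : Fin n → ℝ) (v : Fin m → ℝ),
          α (τ, x, v) = (a (x, τ • v), τ⁻¹ • b (x, τ • v))) →
        ContDiff ℝ (⊤ : ℕ∞) α
        ∧ (∀ (x : Fin n → ℝ) (v : Fin m → ℝ), α (1, x, v) = (a (x, v), b (x, v)))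
        ∧ (∀ (τ : ℝ) (x : Fin n → ℝ), α (τ, x, 0) = (a (x, 0), 0))
        ∧ (∀ (x : Fin n → ℝ) (v : Fin m → ℝ),
            α (0, x, v) = (a (x, 0), fderiv ℝ (fun w : Fin m → ℝ => b (x, w)) 0 v)) :=
  hadamard_lemma_vector_bundles_general a b hab hb0
end

section
/- Let h = (a, b) : ℝⁿ × ℝᵐ → ℝ^p × ℝ^q be a C^∞ map with b(x, 0) = 0 for all x ∈ ℝⁿ, and define α : ℝ × ℝⁿ × ℝᵐ → ℝ^p × ℝ^q by α(τ, x, v) = ( a(x, τ·v), Σ_{i=1}^{m} vᵢ · ∫_0^1 (∂b/∂vᵢ)(x, s·τ·v) ds ). Then for every τ ∈ ℝ and every x ∈ ℝⁿ, the total (Fréchet) derivative of the map (x', v') ↦ α(τ, x', v') at the point (x, 0) sends (u, w) ∈ ℝⁿ × ℝᵐ to ( P(u) + τ·Q(w), S(w) ), where P is the derivative at x of x' ↦ a(x', 0), Q is the derivative at 0 of v' ↦ a(x, v'), and S is the derivative at 0 of v' ↦ b(x, v'). In particular the 'R-block' (derivative of the second component in the x-directions at the zero section) vanishes, and the 'Q-block'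 gets multiplied by τ. -/
/-!
On the zero section the first component of the homotopy is `a ∘ (x, τ v)`, so the chain rule
scales the `Q` block by `τ`. The second component is `Σᵢ vᵢ • gᵢ(x, v)` with `gᵢ` a parametric
integral of the continuous partial derivative `∂b/∂vᵢ`, hence continuous. Because the coefficient
`vᵢ` vanishes on the zero section, continuity of `gᵢ` suffices for differentiability there, with
derivative `(u, w) ↦ Σᵢ wᵢ • gᵢ(x, 0) = Σᵢ wᵢ • ∂b/∂vᵢ(x, 0) = S w`; in particular the `R` block
vanishes.
-/

open Asymptotics Filter Topology ContinuousLinearMap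

section Calculus

variable {𝕜 : Type*} [NontriviallyNormedField 𝕜]
  {E F G : Type*} [NormedAddCommGroup E] [NormedSpace 𝕜 E] [NormedAddCommGroup F]
  [NormedSpace 𝕜 F] [NormedAddCommGroup G] [NormedSpace 𝕜 G]

theorem DifferentiableAt.fderiv_comp_prodMk_left {f : E × F → G} {x : E} {v : F}
    (hf : DifferentiableAt 𝕜 f (x, v)) :
    fderiv 𝕜 (fun x' => f (x', v)) x = (fderiv 𝕜 f (x, v)).comp (inl 𝕜 E F) :=
  (hf.hasFDerivAt.comp x (hasFDerivAt_prodMk_left x v)).fderiv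

theorem DifferentiableAt.fderiv_comp_prodMk_right {f : E × F → G} {x : E} {v : F}
    (hf : DifferentiableAt 𝕜 f (x, v)) :
    fderiv 𝕜 (fun v' => f (x, v')) v = (fderiv 𝕜 f (x, v)).comp (inr 𝕜 E F) :=
  (hf.hasFDerivAt.comp v (hasFDerivAt_prodMk_right x v)).fderiv

theorem DifferentiableAt.fderiv_apply_eq_add_partials {f : E × F → G} {x : E} {v : F}
    (hf : DifferentiableAt 𝕜 f (x, v)) (u : E) (w : F) :
    fderiv 𝕜 f (x, v) (u, w) = fderiv 𝕜 (fun x' => f (x', v)) x u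
      + fderiv 𝕜 (fun v' => f (x, v')) v w := by
  rw [hf.fderiv_comp_prodMk_left, hf.fderiv_comp_prodMk_right, comp_apply, comp_apply,
    ← map_add, inl_apply, inr_apply, Prod.mk_add_mk, add_zero, zero_add]

theorem ContDiff.continuous_partial_fderiv_snd {f : E × F → G} (hf : ContDiff 𝕜 1 f) :
    Continuous fun z : E × F => fderiv 𝕜 (fun v => f (z.1, v)) z.2 := by
  have hd := hf.differentiable one_ne_zero
  simp_rw [fun z : E × F => (hd (z.1, z.2)).fderiv_comp_prodMk_right]
  exact (hf.continuous_fderiv one_ne_zero).clm_comp continuous_const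

theorem HasFDerivAt.comp_smul_snd {f : E × F → G} {L : E × F →L[𝕜] G} {x : E} {v : F} {c : 𝕜}
    (hf : HasFDerivAt f L (x, c • v)) :
    HasFDerivAt (fun z : E × F => f (z.1, c • z.2)) (L.comp ((fst 𝕜 E F).prod (c • snd 𝕜 E F)))
      (x, v) :=
  hf.comp (x, v) (hasFDerivAt_fst.prodMk (hasFDerivAt_snd.const_smul c))

/-- `f z • g z = f z • g z₀ + f z • (g z - g z₀)`, and the
last term is `O(‖z - z₀‖) • o(1)`. -/
theorem HasFDerivAt.smul_of_eq_zero {f : E → 𝕜} {g : E → F} {L : E →L[𝕜] 𝕜} {z₀ : E}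
    (hf : HasFDerivAt f L z₀) (hf₀ : f z₀ = 0) (hg : ContinuousAt g z₀) :
    HasFDerivAt (fun z => f z • g z) (L.smulRight (g z₀)) z₀ := by
  have hrem : HasFDerivAt (fun z => f z • (g z - g z₀)) (0 : E →L[𝕜] F) z₀ := by
    have hfO : (fun z => ‖f z‖) =O[𝓝 z₀] fun z => ‖z - z₀‖ := by
      simpa [hf₀] using hf.isBigO_sub.norm_norm
    have hgo : (fun z => ‖g z - g z₀‖) =o[𝓝 z₀] fun _ => (1 : ℝ) :=
      (isLittleO_one_iff ℝ).mpr (by simpa using (hg.tendsto.sub_const (g z₀)).norm)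
    have hprod : (fun z => ‖f z‖ * ‖g z - g z₀‖) =o[𝓝 z₀] fun z => ‖z - z₀‖ := by
      simpa using hfO.mul_isLittleO hgo
    rw [hasFDerivAt_iff_isLittleO, ← isLittleO_norm_left]
    simpa [hf₀, norm_smul] using hprod.of_norm_right
  convert (hf.smul_const (g z₀)).add hrem using 2 with z
  · simp [smul_sub]
  · simp

theorem hasFDerivAt_sum_coord_smul {ι : Type*} [Fintype ι] {g : ι → E × (ι → 𝕜) → F} {x : E}
    (hg : ∀ i, ContinuousAt (g i) (x, 0)) :
    HasFDerivAt (fun z : E × (ι → 𝕜) => ∑ i, z.2 i • g i z)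
      (∑ i, ((proj i).comp (snd 𝕜 E (ι → 𝕜))).smulRight (g i (x, 0))) (x, 0) :=
  HasFDerivAt.fun_sum fun i _ =>
    ((proj i).comp (snd 𝕜 E (ι → 𝕜))).hasFDerivAt.smul_of_eq_zero rfl (hg i)

theorem ContinuousLinearMap.apply_eq_sum_smul_single {ι : Type*} [Fintype ι] [DecidableEq ι]
    (L : (ι → 𝕜) →L[𝕜] F) (w : ι → 𝕜) : L w = ∑ i, w i • L (Pi.single i 1) := by
  conv_lhs => rw [pi_eq_sum_univ' w]
  simp only [map_sum, map_smul]

end Calculus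

theorem jacobi_blocks_of_linearizing_homotopy_general
    {n m p q : ℕ}
    (a : ((Fin n → ℝ) × (Fin m → ℝ)) → (Fin p → ℝ))
    (b : ((Fin n → ℝ) × (Fin m → ℝ)) → (Fin q → ℝ))
    (hab : ContDiff ℝ (⊤ : ℕ∞) (fun z => (a z, b z))) :
    ∀ (τ : ℝ) (x : Fin n → ℝ) (u : Fin n → ℝ) (w : Fin m → ℝ),
      fderiv ℝ
        (fun z : (Fin n → ℝ) × (Fin m → ℝ) =>
          ((a (z.1, τ • z.2),
            ∑ i : Fin m, z.2 i •
              ∫ s in (0:ℝ)..1,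
                fderiv ℝ (fun w' : Fin m → ℝ => b (z.1, w')) (s • (τ • z.2)) (Pi.single i 1)) :
            (Fin p → ℝ) × (Fin q → ℝ)))
        (x, 0) (u, w)
      = (fderiv ℝ (fun x' : Fin n → ℝ => a (x', 0)) x u
            + τ • fderiv ℝ (fun v' : Fin m → ℝ => a (x, v')) 0 w,
         fderiv ℝ (fun v' : Fin m → ℝ => b (x, v')) 0 w) := by
  intro τ x u w
  have ha : ContDiff ℝ 1 a := hab.fst.of_le (by exact_mod_cast le_top)
  have hb : ContDiff ℝ 1 b := hab.snd.of_le (by exact_mod_cast le_top)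
  set g : Fin m → (Fin n → ℝ) × (Fin m → ℝ) → Fin q → ℝ := fun i z =>
    ∫ s in (0:ℝ)..1, fderiv ℝ (fun w' => b (z.1, w')) (s • (τ • z.2)) (Pi.single i 1)
  have hg : ∀ i, Continuous (g i) := fun i =>
    intervalIntegral.continuous_parametric_intervalIntegral_of_continuous'
      ((hb.continuous_partial_fderiv_snd.comp (continuous_fst.fst.prodMk
        (continuous_snd.smul (continuous_fst.snd.const_smul τ)))).clm_apply continuous_const) 0 1
  have hg₀ : ∀ i, g i (x, 0) = fderiv ℝ (fun v => b (x, v)) 0 (Pi.single i 1) := by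
    simp [g]
  have hfst := ((ha.differentiable one_ne_zero) (x, τ • 0)).hasFDerivAt.comp_smul_snd
  rw [(hfst.prodMk (hasFDerivAt_sum_coord_smul fun i => (hg i).continuousAt)).fderiv]
  simp [hg₀, (ha.differentiable one_ne_zero (x, 0)).fderiv_apply_eq_add_partials,
    ← apply_eq_sum_smul_single]

/-- Block structure of the Jacobi matrix of the linearizing homotopy at the zero section:
for `α(τ, x, v) = (a(x, τv), Σᵢ vᵢ ∫_0^1 ∂b/∂vᵢ(x, sτv) ds)`, the total derivative of
`(x', v') ↦ α(τ, x', v')` at `(x, 0)` sends `(u, w)` to `(P u + τ Q w, S w)`, where `P`, `Q`,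
`S` are the corresponding blocks of the Jacobi matrix of `(a, b)` at `(x, 0)`. -/
theorem jacobi_blocks_of_linearizing_homotopy
    {n m p q : ℕ} (hn : 0 < n) (hm : 0 < m) (hp : 0 < p) (hq : 0 < q)
    (a : ((Fin n → ℝ) × (Fin m → ℝ)) → (Fin p → ℝ))
    (b : ((Fin n → ℝ) × (Fin m → ℝ)) → (Fin q → ℝ))
    (hab : ContDiff ℝ (⊤ : ℕ∞) (fun z => (a z, b z)))
    (hb0 : ∀ x : Fin n → ℝ, b (x, 0) = 0) :
    ∀ (τ : ℝ) (x : Fin n → ℝ) (u : Fin n → ℝ) (w : Fin m → ℝ),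
      fderiv ℝ
        (fun z : (Fin n → ℝ) × (Fin m → ℝ) =>
          ((a (z.1, τ • z.2),
            ∑ i : Fin m, z.2 i •
              ∫ s in (0:ℝ)..1,
                fderiv ℝ (fun w' : Fin m → ℝ => b (z.1, w')) (s • (τ • z.2)) (Pi.single i 1)) :
            (Fin p → ℝ) × (Fin q → ℝ)))
        (x, 0) (u, w)
      = (fderiv ℝ (fun x' : Fin n → ℝ => a (x', 0)) x u
            + τ • fderiv ℝ (fun v' : Fin m → ℝ => a (x, v')) 0 w,
         fderiv ℝ (fun v' : Fin m → ℝ => b (x, v')) 0 w) :=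
  jacobi_blocks_of_linearizing_homotopy_general a b hab
end

section
/- Let U ⊆ ℝⁿ × ℝᵐ be open, a : U → ℝ^p a C¹ map, and K ⊆ U a compact set that is star-shaped along fibers, i.e. (x, s·v) ∈ K whenever (x, v) ∈ K and s ∈ [0, 1]. Let δ > 0 and let c : ℝᵐ → [0, 1] be any function with c(v) = 1 whenever ‖v‖ ≥ δ. Then for every (x, v) ∈ K one has ‖a(x, v) − a(x, c(v)·v)‖ ≤ δ · M, where M = sup_{(y,w) ∈ K} ‖D₂a(y, w)‖ is the supremum over K of the operator norm of the partial Fréchet derivative of a in the second (ℝᵐ) variable. -/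
/-!
Along the fiber, `w ↦ a (x, w)` is differentiable on the segment `[0, v]`, which lies in `K` by
star-shapedness, with derivative bounded by `M` there; the mean value inequality then bounds the
difference by `M * ‖v - c v • v‖`. This displacement is at most `δ`: either `‖v‖ ≥ δ` and
`c v = 1`, or `‖v - c v • v‖ = (1 - c v) * ‖v‖ < δ`.
-/

open Set

section
variable {𝕜 E F G : Type*} [NontriviallyNormedField 𝕜]
  [NormedAddCommGroup E] [NormedSpace 𝕜 E] [NormedAddCommGroup F] [NormedSpace 𝕜 F]
  [NormedAddCommGroup G] [NormedSpace 𝕜 G]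

theorem norm_fderiv_prodMk_right_le {a : E × F → G} {z : E × F}
    (ha : DifferentiableAt 𝕜 a z) :
    ‖fderiv 𝕜 (fun w => a (z.1, w)) z.2‖ ≤ ‖fderiv 𝕜 a z‖ := by
  have h : HasFDerivAt (fun w => a (z.1, w))
      ((fderiv 𝕜 a z).comp (ContinuousLinearMap.inr 𝕜 E F)) z.2 :=
    ha.hasFDerivAt.comp z.2 (hasFDerivAt_prodMk_right z.1 z.2)
  rw [h.fderiv]
  calc ‖(fderiv 𝕜 a z).comp (ContinuousLinearMap.inr 𝕜 E F)‖
      ≤ ‖fderiv 𝕜 a z‖ * ‖ContinuousLinearMap.inr 𝕜 E F‖ :=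
        ContinuousLinearMap.opNorm_comp_le _ _
    _ ≤ ‖fderiv 𝕜 a z‖ :=
        mul_le_of_le_one_right (norm_nonneg _) (ContinuousLinearMap.norm_inr_le_one 𝕜 E F)

theorem IsCompact.bddAbove_norm_fderiv_prodMk_right {a : E × F → G} {U K : Set (E × F)}
    (ha : ContDiffOn 𝕜 1 a U) (hU : IsOpen U) (hK : IsCompact K) (hKU : K ⊆ U) :
    BddAbove (range fun z : K => ‖fderiv 𝕜 (fun w => a (z.1.1, w)) z.1.2‖) := by
  obtain ⟨C, hC⟩ := hK.bddAbove_image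
    ((ha.continuousOn_fderiv_of_isOpen hU le_rfl).mono hKU).norm
  refine ⟨C, forall_mem_range.2 fun z => ?_⟩
  have hdiff : DifferentiableAt 𝕜 a z :=
    (ha.contDiffAt (hU.mem_nhds (hKU z.2))).differentiableAt one_ne_zero
  exact (norm_fderiv_prodMk_right_le hdiff).trans (hC ⟨z, z.2, rfl⟩)
end

theorem norm_sub_smul_le_of_eq_one_of_le {E : Type*} [SeminormedAddCommGroup E]
    [NormedSpace ℝ E] {δ t : ℝ} {v : E} (hδ : 0 ≤ δ) (ht : t ∈ Icc (0 : ℝ) 1)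
    (ht1 : δ ≤ ‖v‖ → t = 1) : ‖v - t • v‖ ≤ δ := by
  by_cases hv : δ ≤ ‖v‖
  · simpa [ht1 hv] using hδ
  · calc ‖v - t • v‖ = (1 - t) * ‖v‖ := by
          nth_rw 1 [← one_smul ℝ v]
          rw [← sub_smul, norm_smul, Real.norm_of_nonneg (sub_nonneg.2 ht.2)]
      _ ≤ 1 * δ := by gcongr <;> linarith [ht.1, ht.2]
      _ = δ := one_mul δ

theorem linearizing_deformation_C0_estimate_general
    {n m p : ℕ}
    (U : Set (EuclideanSpace ℝ (Fin n) × EuclideanSpace ℝ (Fin m))) (hU : IsOpen U)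
    (a : EuclideanSpace ℝ (Fin n) × EuclideanSpace ℝ (Fin m) → EuclideanSpace ℝ (Fin p))
    (ha : ContDiffOn ℝ 1 a U)
    (K : Set (EuclideanSpace ℝ (Fin n) × EuclideanSpace ℝ (Fin m)))
    (hK : IsCompact K) (hKU : K ⊆ U)
    (hstar : ∀ z ∈ K, ∀ s ∈ Set.Icc (0:ℝ) 1,
      ((z : EuclideanSpace ℝ (Fin n) × EuclideanSpace ℝ (Fin m)).1, s • z.2) ∈ K)
    (δ : ℝ) (hδ : 0 < δ)
    (c : EuclideanSpace ℝ (Fin m) → ℝ)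
    (hc : ∀ v, c v ∈ Set.Icc (0:ℝ) 1)
    (hc1 : ∀ v : EuclideanSpace ℝ (Fin m), δ ≤ ‖v‖ → c v = 1) :
    ∀ x : EuclideanSpace ℝ (Fin n), ∀ v : EuclideanSpace ℝ (Fin m), (x, v) ∈ K →
      ‖a (x, v) - a (x, c v • v)‖ ≤
        δ * ⨆ z : K, ‖fderiv ℝ (fun w : EuclideanSpace ℝ (Fin m) => a (z.1.1, w)) z.1.2‖ := by
  intro x v hxv
  set M := ⨆ z : K, ‖fderiv ℝ (fun w : EuclideanSpace ℝ (Fin m) => a (z.1.1, w)) z.1.2‖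
  have hfiber : StarConvex ℝ 0 {w | (x, w) ∈ K} :=
    starConvex_zero_iff.2 fun w hw s hs₀ hs₁ => hstar (x, w) hw s ⟨hs₀, hs₁⟩
  have hseg : segment ℝ 0 v ⊆ {w | (x, w) ∈ K} := hfiber.segment_subset hxv
  have hcv : c v • v ∈ segment ℝ 0 v :=
    ⟨1 - c v, c v, by linarith [(hc v).2], (hc v).1, by ring, by simp⟩
  have hdiff : ∀ w ∈ segment ℝ 0 v, DifferentiableAt ℝ (fun w => a (x, w)) w := fun w hw =>
    ((ha.contDiffAt (hU.mem_nhds (hKU (hseg hw)))).differentiableAt one_ne_zero).comp w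
      (differentiableAt_const x |>.prodMk differentiableAt_id)
  have hbound : ∀ w ∈ segment ℝ 0 v, ‖fderiv ℝ (fun w => a (x, w)) w‖ ≤ M := fun w hw =>
    le_ciSup (hK.bddAbove_norm_fderiv_prodMk_right ha hU hKU) (⟨(x, w), hseg hw⟩ : K)
  calc ‖a (x, v) - a (x, c v • v)‖ ≤ M * ‖v - c v • v‖ :=
        (convex_segment 0 v).norm_image_sub_le_of_norm_fderiv_le hdiff hbound hcv
          (right_mem_segment ℝ 0 v)
    _ ≤ M * δ := by
        gcongr
        · exact Real.iSup_nonneg fun _ => norm_nonneg _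
        · exact norm_sub_smul_le_of_eq_one_of_le hδ.le (hc v) (hc1 v)
    _ = δ * M := mul_comm M δ

/-- C⁰-estimate for the linearizing deformation of the base component: if `a` is `C¹` on an
open set `U`, `K ⊆ U` is compact and star-shaped along fibers, `0 < δ`, and `c : ℝᵐ → [0,1]`
equals `1` outside the `δ`-tube, then `‖a(x,v) − a(x, c(v)·v)‖ ≤ δ·M` on `K`, where `M` is the
sup over `K` of the operator norm of the partial derivative of `a` in the fiber variable. -/
theorem linearizing_deformation_C0_estimate
    {n m p : ℕ} (hn : 0 < n) (hm : 0 < m) (hp : 0 < p)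
    (U : Set (EuclideanSpace ℝ (Fin n) × EuclideanSpace ℝ (Fin m))) (hU : IsOpen U)
    (a : EuclideanSpace ℝ (Fin n) × EuclideanSpace ℝ (Fin m) → EuclideanSpace ℝ (Fin p))
    (ha : ContDiffOn ℝ 1 a U)
    (K : Set (EuclideanSpace ℝ (Fin n) × EuclideanSpace ℝ (Fin m)))
    (hK : IsCompact K) (hKU : K ⊆ U)
    (hstar : ∀ z ∈ K, ∀ s ∈ Set.Icc (0:ℝ) 1,
      ((z : EuclideanSpace ℝ (Fin n) × EuclideanSpace ℝ (Fin m)).1, s • z.2) ∈ K)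
    (δ : ℝ) (hδ : 0 < δ)
    (c : EuclideanSpace ℝ (Fin m) → ℝ)
    (hc : ∀ v, c v ∈ Set.Icc (0:ℝ) 1)
    (hc1 : ∀ v : EuclideanSpace ℝ (Fin m), δ ≤ ‖v‖ → c v = 1) :
    ∀ x : EuclideanSpace ℝ (Fin n), ∀ v : EuclideanSpace ℝ (Fin m), (x, v) ∈ K →
      ‖a (x, v) - a (x, c v • v)‖ ≤
        δ * ⨆ z : K, ‖fderiv ℝ (fun w : EuclideanSpace ℝ (Fin m) => a (z.1.1, w)) z.1.2‖ :=
  linearizing_deformation_C0_estimate_general U hU a ha K hK hKU hstar δ hδ c hc hc1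
end

section
/- Let U ⊆ ℝⁿ × ℝᵐ be open, b : U → ℝ^q a C² map with b(x, 0) = 0 for all (x, 0) ∈ U, and K ⊆ U a compact set that is star-shaped along fibers, i.e. (x, s·v) ∈ K whenever (x, v) ∈ K and s ∈ [0, 1]. Let δ > 0 and let c : ℝᵐ → [0, 1] be any function with c(v) = 1 whenever ‖v‖ ≥ δ. Then for every (x, v) ∈ K one has ‖ b(x, v) − Σ_{i=1}^{m} vᵢ · ∫_0^1 (∂b/∂vᵢ)(x, s·c(v)·v) ds ‖ ≤ δ² · M₂, where M₂ = sup_{(y,w) ∈ K} ‖D₂²b(y, w)‖ is the supremum over K of the norm of the second partial Fréchet derivative of b in the second (ℝᵐ) variable. -/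
/-!
On the fibre through `x`, `g = b (x, ·)` vanishes at `0`, so `g v = ∫₀¹ Dg(s v) v ds`, while the
sum in the statement is `∫₀¹ Dg(s c(v) v) v ds`. By the mean value inequality along the ray
`[0, 1] • v`, which stays in `K`, the two integrands differ by at most `M₂ (1 - c(v)) ‖v‖²`. This
vanishes when `‖v‖ ≥ δ`, where `c(v) = 1`, and is at most `M₂ δ²` otherwise. Compactness of `K`
is what makes `M₂` an honest supremum rather than the junk value of an unbounded `⨆`.
-/

open Set MeasureTheory intervalIntegral

section Ray

variable {F G : Type*} [NormedAddCommGroup F] [NormedSpace ℝ F]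
  [NormedAddCommGroup G] [NormedSpace ℝ G] {g : F → G} {V : Set F} {v : F}

lemma smul_smul_mem_of_forall_smul_mem (hv : ∀ r ∈ Icc (0 : ℝ) 1, r • v ∈ V) {t : ℝ}
    (ht : t ∈ Icc (0 : ℝ) 1) : ∀ r ∈ Icc (0 : ℝ) 1, r • t • v ∈ V := fun r hr => by
  rw [smul_smul]
  exact hv _ ⟨mul_nonneg hr.1 ht.1, mul_le_one₀ hr.2 ht.1 ht.2⟩

lemma DifferentiableAt.hasDerivAt_comp_smul {H : Type*} [NormedAddCommGroup H]
    [NormedSpace ℝ H] {f : F → H} {r : ℝ} (hf : DifferentiableAt ℝ f (r • v)) :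
    HasDerivAt (fun s : ℝ => f (s • v)) (fderiv ℝ f (r • v) v) r :=
  hf.hasFDerivAt.comp_hasDerivAt r ((hasDerivAt_id r).smul_const v |>.congr_deriv (one_smul ℝ v))

lemma continuousOn_fderiv_comp_smul (hV : IsOpen V) (hg : ContDiffOn ℝ 1 g V)
    (hv : ∀ r ∈ Icc (0 : ℝ) 1, r • v ∈ V) :
    ContinuousOn (fun s : ℝ => fderiv ℝ g (s • v)) (Icc 0 1) :=
  (hg.continuousOn_fderiv_of_isOpen hV le_rfl).comp (by fun_prop) hv

lemma intervalIntegrable_fderiv_comp_smul (hV : IsOpen V) (hg : ContDiffOn ℝ 1 g V)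
    (hv : ∀ r ∈ Icc (0 : ℝ) 1, r • v ∈ V) :
    IntervalIntegrable (fun s : ℝ => fderiv ℝ g (s • v)) volume 0 1 :=
  (continuousOn_fderiv_comp_smul hV hg hv).intervalIntegrable_of_Icc zero_le_one

lemma norm_fderiv_comp_smul_sub_le (hV : IsOpen V) (hg : ContDiffOn ℝ 2 g V)
    (hv : ∀ r ∈ Icc (0 : ℝ) 1, r • v ∈ V) {M : ℝ}
    (hM : ∀ r ∈ Icc (0 : ℝ) 1, ‖fderiv ℝ (fderiv ℝ g) (r • v)‖ ≤ M)
    {a a' : ℝ} (ha : a ∈ Icc (0 : ℝ) 1) (ha' : a' ∈ Icc (0 : ℝ) 1) :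
    ‖fderiv ℝ g (a • v) - fderiv ℝ g (a' • v)‖ ≤ M * ‖v‖ * |a - a'| := by
  have hg' : DifferentiableOn ℝ (fderiv ℝ g) V :=
    (hg.fderiv_of_isOpen hV (by norm_num) : ContDiffOn ℝ 1 _ V).differentiableOn one_ne_zero
  have hderiv : ∀ r ∈ Icc (0 : ℝ) 1, HasDerivWithinAt (fun s : ℝ => fderiv ℝ g (s • v))
      (fderiv ℝ (fderiv ℝ g) (r • v) v) (Icc 0 1) r := fun r hr =>
    (hg'.differentiableAt (hV.mem_nhds (hv r hr))).hasDerivAt_comp_smul.hasDerivWithinAt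
  have hbound : ∀ r ∈ Icc (0 : ℝ) 1, ‖fderiv ℝ (fderiv ℝ g) (r • v) v‖ ≤ M * ‖v‖ :=
    fun r hr => (ContinuousLinearMap.le_opNorm _ _).trans (by gcongr; exact hM r hr)
  simpa [Real.norm_eq_abs] using
    (convex_Icc (0 : ℝ) 1).norm_image_sub_le_of_norm_hasDerivWithin_le hderiv hbound ha' ha

variable [CompleteSpace G]

lemma integral_fderiv_comp_smul_apply (hV : IsOpen V) (hg : ContDiffOn ℝ 1 g V)
    (hv : ∀ r ∈ Icc (0 : ℝ) 1, r • v ∈ V) :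
    (∫ s in (0 : ℝ)..1, fderiv ℝ g (s • v)) v = g v - g 0 := by
  have hint_apply : IntervalIntegrable (fun s : ℝ => fderiv ℝ g (s • v) v) volume 0 1 :=
    ((continuousOn_fderiv_comp_smul hV hg hv).clm_apply
      continuousOn_const).intervalIntegrable_of_Icc zero_le_one
  have hderiv : ∀ r ∈ uIcc (0 : ℝ) 1,
      HasDerivAt (fun s : ℝ => g (s • v)) (fderiv ℝ g (r • v) v) r := fun r hr => by
    rw [uIcc_of_le zero_le_one] at hr
    exact ((hg.differentiableOn one_ne_zero).differentiableAt
      (hV.mem_nhds (hv r hr))).hasDerivAt_comp_smul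
  rw [ContinuousLinearMap.intervalIntegral_apply (intervalIntegrable_fderiv_comp_smul hV hg hv),
    integral_eq_sub_of_hasDerivAt hderiv hint_apply, one_smul, zero_smul]

lemma norm_sub_sub_integral_fderiv_comp_smul_le (hV : IsOpen V) (hg : ContDiffOn ℝ 2 g V)
    (hv : ∀ r ∈ Icc (0 : ℝ) 1, r • v ∈ V) {M : ℝ}
    (hM : ∀ r ∈ Icc (0 : ℝ) 1, ‖fderiv ℝ (fderiv ℝ g) (r • v)‖ ≤ M)
    {t : ℝ} (ht : t ∈ Icc (0 : ℝ) 1) :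
    ‖g v - g 0 - (∫ s in (0 : ℝ)..1, fderiv ℝ g (s • t • v)) v‖ ≤ M * (1 - t) * ‖v‖ ^ 2 := by
  have hg1 : ContDiffOn ℝ 1 g V := hg.of_le (by norm_num)
  have hM0 : 0 ≤ M := (norm_nonneg (fderiv ℝ (fderiv ℝ g) ((0 : ℝ) • v))).trans
    (hM 0 ⟨le_rfl, zero_le_one⟩)
  have hpointwise : ∀ s ∈ uIoc (0 : ℝ) 1,
      ‖fderiv ℝ g (s • v) - fderiv ℝ g (s • t • v)‖ ≤ M * ‖v‖ * (1 - t) := by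
    intro s hs
    rw [uIoc_of_le zero_le_one] at hs
    have hs' : s ∈ Icc (0 : ℝ) 1 := Ioc_subset_Icc_self hs
    have hst : s * t ∈ Icc (0 : ℝ) 1 := ⟨mul_nonneg hs'.1 ht.1, mul_le_one₀ hs'.2 ht.1 ht.2⟩
    have hdist : |s - s * t| ≤ 1 - t := by
      rw [← mul_one_sub, abs_of_nonneg (mul_nonneg hs'.1 (sub_nonneg.2 ht.2))]
      exact mul_le_of_le_one_left (sub_nonneg.2 ht.2) hs'.2
    calc ‖fderiv ℝ g (s • v) - fderiv ℝ g (s • t • v)‖ ≤ M * ‖v‖ * |s - s * t| := by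
          rw [smul_smul]; exact norm_fderiv_comp_smul_sub_le hV hg hv hM hs' hst
      _ ≤ M * ‖v‖ * (1 - t) := by gcongr
  rw [← integral_fderiv_comp_smul_apply hV hg1 hv, ← sub_apply,
    ← integral_sub (intervalIntegrable_fderiv_comp_smul hV hg1 hv)
      (intervalIntegrable_fderiv_comp_smul hV hg1 (smul_smul_mem_of_forall_smul_mem hv ht))]
  calc ‖(∫ s in (0 : ℝ)..1, fderiv ℝ g (s • v) - fderiv ℝ g (s • t • v)) v‖
      ≤ ‖∫ s in (0 : ℝ)..1, fderiv ℝ g (s • v) - fderiv ℝ g (s • t • v)‖ * ‖v‖ :=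
        ContinuousLinearMap.le_opNorm _ _
    _ ≤ M * ‖v‖ * (1 - t) * |1 - 0| * ‖v‖ := by
        gcongr; exact norm_integral_le_of_norm_le_const hpointwise
    _ = M * (1 - t) * ‖v‖ ^ 2 := by norm_num; ring

end Ray

lemma ContinuousLinearMap.norm_bilinearComp_le {𝕜 E F G E' F' : Type*}
    [NontriviallyNormedField 𝕜] [SeminormedAddCommGroup E] [NormedSpace 𝕜 E]
    [SeminormedAddCommGroup F] [NormedSpace 𝕜 F] [SeminormedAddCommGroup G] [NormedSpace 𝕜 G]
    [SeminormedAddCommGroup E'] [NormedSpace 𝕜 E'] [SeminormedAddCommGroup F'] [NormedSpace 𝕜 F']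
    (f : E →L[𝕜] F →L[𝕜] G) (gE : E' →L[𝕜] E) (gF : F' →L[𝕜] F) :
    ‖f.bilinearComp gE gF‖ ≤ ‖f‖ * ‖gE‖ * ‖gF‖ :=
  f.bilinearComp gE gF |>.opNorm_le_bound₂ (by positivity) fun x y =>
    calc ‖f (gE x) (gF y)‖ ≤ ‖f‖ * ‖gE x‖ * ‖gF y‖ := f.le_opNorm₂ _ _
      _ ≤ ‖f‖ * (‖gE‖ * ‖x‖) * (‖gF‖ * ‖y‖) := by gcongr <;> exact le_opNorm _ _
      _ = ‖f‖ * ‖gE‖ * ‖gF‖ * ‖x‖ * ‖y‖ := by ring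

section PartialDerivative

variable {𝕜 E F G : Type*} [NontriviallyNormedField 𝕜]
  [NormedAddCommGroup E] [NormedSpace 𝕜 E] [NormedAddCommGroup F] [NormedSpace 𝕜 F]
  [NormedAddCommGroup G] [NormedSpace 𝕜 G] {b : E × F → G} {U : Set (E × F)}

lemma hasFDerivAt_partial_right {y : E} {w : F} (hb : DifferentiableAt 𝕜 b (y, w)) :
    HasFDerivAt (fun w' => b (y, w'))
      ((fderiv 𝕜 b (y, w)).comp (ContinuousLinearMap.inr 𝕜 E F)) w :=
  hb.hasFDerivAt.comp w (hasFDerivAt_prodMk_right y w)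

lemma hasFDerivAt_fderiv_partial_right (hU : IsOpen U) (hb : ContDiffOn 𝕜 2 b U) {y : E}
    {w : F} (hyw : (y, w) ∈ U) :
    HasFDerivAt (fun w => fderiv 𝕜 (fun w' => b (y, w')) w)
      ((fderiv 𝕜 (fderiv 𝕜 b) (y, w)).bilinearComp (ContinuousLinearMap.inr 𝕜 E F)
        (ContinuousLinearMap.inr 𝕜 E F)) w := by
  have hb1 : DifferentiableOn 𝕜 b U := hb.differentiableOn (by norm_num)
  have hb2 : DifferentiableOn 𝕜 (fderiv 𝕜 b) U :=
    (hb.fderiv_of_isOpen hU (by norm_num) : ContDiffOn 𝕜 1 _ U).differentiableOn one_ne_zero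
  have hslice : {w' : F | (y, w') ∈ U} ∈ nhds w :=
    (hU.preimage (Continuous.prodMk_right y)).mem_nhds hyw
  have hcomp := ((hb2.differentiableAt (hU.mem_nhds hyw)).hasFDerivAt.comp w
    (hasFDerivAt_prodMk_right y w)).clm_comp
      (hasFDerivAt_const (ContinuousLinearMap.inr 𝕜 E F) w)
  refine (hcomp.congr_fderiv ?_).congr_of_eventuallyEq ?_
  · ext u w'
    simp
  · filter_upwards [hslice] with w' hw'
    exact (hasFDerivAt_partial_right (hb1.differentiableAt (hU.mem_nhds hw'))).fderiv

lemma norm_fderiv_fderiv_partial_right_le (hU : IsOpen U) (hb : ContDiffOn 𝕜 2 b U) {y : E}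
    {w : F} (hyw : (y, w) ∈ U) :
    ‖fderiv 𝕜 (fun w => fderiv 𝕜 (fun w' => b (y, w')) w) w‖ ≤
      ‖fderiv 𝕜 (fderiv 𝕜 b) (y, w)‖ := by
  rw [(hasFDerivAt_fderiv_partial_right hU hb hyw).fderiv]
  have hinr := ContinuousLinearMap.norm_inr_le_one (𝕜 := 𝕜) (E := E) (F := F)
  calc _ ≤ ‖fderiv 𝕜 (fderiv 𝕜 b) (y, w)‖ * ‖ContinuousLinearMap.inr 𝕜 E F‖ *
        ‖ContinuousLinearMap.inr 𝕜 E F‖ := ContinuousLinearMap.norm_bilinearComp_le _ _ _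
    _ ≤ ‖fderiv 𝕜 (fderiv 𝕜 b) (y, w)‖ * 1 * 1 := by gcongr
    _ = _ := by ring

lemma bddAbove_norm_fderiv_fderiv_partial_right (hU : IsOpen U) (hb : ContDiffOn 𝕜 2 b U)
    {K : Set (E × F)} (hK : IsCompact K) (hKU : K ⊆ U) :
    BddAbove (range fun z : K =>
      ‖fderiv 𝕜 (fun w => fderiv 𝕜 (fun w' => b (z.1.1, w')) w) z.1.2‖) := by
  have hb2 : ContinuousOn (fderiv 𝕜 (fderiv 𝕜 b)) U :=
    (hb.fderiv_of_isOpen hU (by norm_num) : ContDiffOn 𝕜 1 _ U).continuousOn_fderiv_of_isOpen hU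
      le_rfl
  obtain ⟨C, hC⟩ := hK.exists_bound_of_continuousOn (f := fderiv 𝕜 (fderiv 𝕜 b)) (hb2.mono hKU)
  refine ⟨C, ?_⟩
  rintro _ ⟨z, rfl⟩
  exact (norm_fderiv_fderiv_partial_right_le hU hb (hKU z.2)).trans (hC z z.2)

end PartialDerivative

lemma EuclideanSpace.sum_smul_intervalIntegral_apply_single {ι G : Type*} [Fintype ι]
    [DecidableEq ι] [NormedAddCommGroup G] [NormedSpace ℝ G] [CompleteSpace G]
    {L : ℝ → EuclideanSpace ℝ ι →L[ℝ] G} {a a' : ℝ} (hL : IntervalIntegrable L volume a a')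
    (v : EuclideanSpace ℝ ι) :
    ∑ i, v i • ∫ s in a..a', L s (EuclideanSpace.single i 1) = (∫ s in a..a', L s) v := by
  simp_rw [← ContinuousLinearMap.intervalIntegral_apply hL, ← map_smul, ← map_sum]
  congr 1
  simpa [EuclideanSpace.basisFun_apply] using (EuclideanSpace.basisFun ι ℝ).sum_repr v

lemma one_sub_mul_sq_le_sq {c r δ : ℝ} (hc : c ∈ Icc (0 : ℝ) 1) (hr : 0 ≤ r)
    (hc1 : δ ≤ r → c = 1) : (1 - c) * r ^ 2 ≤ δ ^ 2 := by
  rcases le_or_gt δ r with hrδ | hrδ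
  · simp [hc1 hrδ, sq_nonneg]
  · calc (1 - c) * r ^ 2 ≤ 1 * δ ^ 2 := by gcongr; linarith [hc.1]
      _ = δ ^ 2 := one_mul _

theorem linearizing_deformation_second_order_estimate_general
    {n m q : ℕ}
    (U : Set (EuclideanSpace ℝ (Fin n) × EuclideanSpace ℝ (Fin m))) (hU : IsOpen U)
    (b : EuclideanSpace ℝ (Fin n) × EuclideanSpace ℝ (Fin m) → EuclideanSpace ℝ (Fin q))
    (hb : ContDiffOn ℝ 2 b U)
    (hb0 : ∀ x : EuclideanSpace ℝ (Fin n), (x, (0 : EuclideanSpace ℝ (Fin m))) ∈ U →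
      b (x, 0) = 0)
    (K : Set (EuclideanSpace ℝ (Fin n) × EuclideanSpace ℝ (Fin m)))
    (hK : IsCompact K) (hKU : K ⊆ U)
    (hstar : ∀ z ∈ K, ∀ s ∈ Set.Icc (0:ℝ) 1,
      ((z : EuclideanSpace ℝ (Fin n) × EuclideanSpace ℝ (Fin m)).1, s • z.2) ∈ K)
    (δ : ℝ)
    (c : EuclideanSpace ℝ (Fin m) → ℝ)
    (hc : ∀ v, c v ∈ Set.Icc (0:ℝ) 1)
    (hc1 : ∀ v : EuclideanSpace ℝ (Fin m), δ ≤ ‖v‖ → c v = 1) :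
    ∀ x : EuclideanSpace ℝ (Fin n), ∀ v : EuclideanSpace ℝ (Fin m), (x, v) ∈ K →
      ‖b (x, v) - ∑ i : Fin m, v i •
          ∫ s in (0:ℝ)..1,
            fderiv ℝ (fun w : EuclideanSpace ℝ (Fin m) => b (x, w)) (s • (c v • v))
              (EuclideanSpace.single i 1)‖ ≤
        δ ^ 2 * ⨆ z : K,
          ‖fderiv ℝ
              (fun w : EuclideanSpace ℝ (Fin m) =>
                fderiv ℝ (fun w' : EuclideanSpace ℝ (Fin m) => b (z.1.1, w')) w)
              z.1.2‖ := by
  intro x v hxv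
  set M₂ := ⨆ z : K, ‖fderiv ℝ (fun w => fderiv ℝ (fun w' => b (z.1.1, w')) w) z.1.2‖
  have hV : IsOpen {w | (x, w) ∈ U} := hU.preimage (Continuous.prodMk_right x)
  have hg : ContDiffOn ℝ 2 (fun w => b (x, w)) {w | (x, w) ∈ U} :=
    hb.comp (contDiff_const.prodMk contDiff_id).contDiffOn fun _ hw => hw
  have hray : ∀ r ∈ Icc (0 : ℝ) 1, (x, r • v) ∈ K := fun r hr => hstar _ hxv r hr
  have hv : ∀ r ∈ Icc (0 : ℝ) 1, r • v ∈ {w | (x, w) ∈ U} := fun r hr => hKU (hray r hr)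
  have hg0 : b (x, 0) = 0 := hb0 x (by simpa using hv 0 ⟨le_rfl, zero_le_one⟩)
  have hM : ∀ r ∈ Icc (0 : ℝ) 1, ‖fderiv ℝ (fderiv ℝ fun w => b (x, w)) (r • v)‖ ≤ M₂ :=
    fun r hr => le_ciSup (bddAbove_norm_fderiv_fderiv_partial_right hU hb hK hKU) ⟨_, hray r hr⟩
  have hM₂ : 0 ≤ M₂ := Real.iSup_nonneg fun _ => by positivity
  rw [EuclideanSpace.sum_smul_intervalIntegral_apply_single
    (intervalIntegrable_fderiv_comp_smul hV (hg.of_le (by norm_num))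
      (smul_smul_mem_of_forall_smul_mem hv (hc v)))]
  calc _ = ‖b (x, v) - b (x, 0) - _‖ := by rw [hg0, sub_zero]
    _ ≤ M₂ * (1 - c v) * ‖v‖ ^ 2 := norm_sub_sub_integral_fderiv_comp_smul_le hV hg hv hM (hc v)
    _ = M₂ * ((1 - c v) * ‖v‖ ^ 2) := mul_assoc _ _ _
    _ ≤ M₂ * δ ^ 2 := by gcongr; exact one_sub_mul_sq_le_sq (hc v) (norm_nonneg v) (hc1 v)
    _ = δ ^ 2 * M₂ := mul_comm _ _

/-- Second-order estimate for the fiberwise part of the linearizing deformation: if `b` is `C²`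
on an open set `U`, vanishes on the zero section, `K ⊆ U` is compact and star-shaped along
fibers, `0 < δ`, and `c : ℝᵐ → [0,1]` equals `1` outside the `δ`-tube, then
`‖b(x,v) − Σᵢ vᵢ ∫_0^1 ∂b/∂vᵢ(x, s·c(v)·v) ds‖ ≤ δ²·M₂` on `K`, where `M₂` is the sup over `K`
of the norm of the second partial derivative of `b` in the fiber variable. -/
theorem linearizing_deformation_second_order_estimate
    {n m q : ℕ} (hn : 0 < n) (hm : 0 < m) (hq : 0 < q)
    (U : Set (EuclideanSpace ℝ (Fin n) × EuclideanSpace ℝ (Fin m))) (hU : IsOpen U)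
    (b : EuclideanSpace ℝ (Fin n) × EuclideanSpace ℝ (Fin m) → EuclideanSpace ℝ (Fin q))
    (hb : ContDiffOn ℝ 2 b U)
    (hb0 : ∀ x : EuclideanSpace ℝ (Fin n), (x, (0 : EuclideanSpace ℝ (Fin m))) ∈ U →
      b (x, 0) = 0)
    (K : Set (EuclideanSpace ℝ (Fin n) × EuclideanSpace ℝ (Fin m)))
    (hK : IsCompact K) (hKU : K ⊆ U)
    (hstar : ∀ z ∈ K, ∀ s ∈ Set.Icc (0:ℝ) 1,
      ((z : EuclideanSpace ℝ (Fin n) × EuclideanSpace ℝ (Fin m)).1, s • z.2) ∈ K)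
    (δ : ℝ) (hδ : 0 < δ)
    (c : EuclideanSpace ℝ (Fin m) → ℝ)
    (hc : ∀ v, c v ∈ Set.Icc (0:ℝ) 1)
    (hc1 : ∀ v : EuclideanSpace ℝ (Fin m), δ ≤ ‖v‖ → c v = 1) :
    ∀ x : EuclideanSpace ℝ (Fin n), ∀ v : EuclideanSpace ℝ (Fin m), (x, v) ∈ K →
      ‖b (x, v) - ∑ i : Fin m, v i •
          ∫ s in (0:ℝ)..1,
            fderiv ℝ (fun w : EuclideanSpace ℝ (Fin m) => b (x, w)) (s • (c v • v))
              (EuclideanSpace.single i 1)‖ ≤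
        δ ^ 2 * ⨆ z : K,
          ‖fderiv ℝ
              (fun w : EuclideanSpace ℝ (Fin m) =>
                fderiv ℝ (fun w' : EuclideanSpace ℝ (Fin m) => b (z.1.1, w')) w)
              z.1.2‖ :=
  linearizing_deformation_second_order_estimate_general U hU b hb hb0 K hK hKU hstar δ c hc hc1
end

section
/- Let B be a locally path-connected topological space, m ≥ 1 an integer, k > 0 a real number, and f : B × ℝᵐ → ℝ a continuous function that is fiberwise homogeneous of degree k, i.e. f(b, τ·v) = τ^k · f(b, v) for all τ > 0, b ∈ B, v ∈ ℝᵐ. Assume: (i) there exist a < 0 and b > 0 such that every path component of f⁻¹(a) and every path component of f⁻¹(b) is closed in B × ℝᵐ; (ii) the subspace f⁻¹(0) ∖ (B × {0}) is locally path connected. Then for every leaf ω of the (f, B)-partition, the set cl(ω) ∖ ω is contained in B × {0}; moreover for every c ≠ 0, every path component of f⁻¹(c) is closed in B × ℝᵐ. -/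
/-!
Scaling the fibre by `τ > 0` is a homeomorphism of `B × ℝᵐ` that carries `f⁻¹(c)` onto
`f⁻¹(τ^k c)`, so it matches path components of levels of the same sign; hence closedness of the
path components of `f⁻¹(a)` and `f⁻¹(b)` spreads to every nonzero level. Nonzero levels avoid the
zero section, where `f` vanishes. On the punctured zero level, local path connectedness makes path
components closed in the punctured level, whose closure adds only points of the zero section.
-/

open Set

theorem Homeomorph.preimage_pathComponentIn {X Y : Type*} [TopologicalSpace X]
    [TopologicalSpace Y] (e : X ≃ₜ Y) (F : Set Y) (x : X) :
    e ⁻¹' pathComponentIn F (e x) = pathComponentIn (e ⁻¹' F) x := by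
  ext y
  constructor
  · intro (h : JoinedIn F (e x) (e y))
    have h' := h.map e.symm.continuous
    rwa [e.image_symm, e.symm_apply_apply, e.symm_apply_apply] at h'
  · intro (h : JoinedIn (e ⁻¹' F) x y)
    have h' := h.map e.continuous
    rwa [e.image_preimage] at h'

theorem pathComponentIn_eq_image_pathComponent {X : Type*} [TopologicalSpace X] {F : Set X}
    {x : X} (hx : x ∈ F) :
    pathComponentIn F x = Subtype.val '' pathComponent (⟨x, hx⟩ : F) := by
  ext y
  constructor
  · intro (h : JoinedIn F x y)
    exact ⟨⟨y, h.target_mem⟩, h.joined_subtype, rfl⟩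
  · rintro ⟨⟨y, hy⟩, h, rfl⟩
    exact (joinedIn_iff_joined hx hy).mpr h

theorem closure_pathComponentIn_inter_subset {X : Type*} [TopologicalSpace X] {S : Set X}
    [LocallyPathConnectedSpace S] (x : X) :
    closure (pathComponentIn S x) ∩ S ⊆ pathComponentIn S x := by
  rintro y ⟨hy, hyS⟩
  by_cases hx : x ∈ S
  · rw [pathComponentIn_eq_image_pathComponent hx] at hy ⊢
    have hy' : (⟨y, hyS⟩ : S) ∈ closure (pathComponent (⟨x, hx⟩ : S)) := closure_subtype.mpr hy
    rw [(IsClosed.pathComponent _).closure_eq] at hy'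
    exact ⟨_, hy', rfl⟩
  · rw [← pathComponentIn_nonempty_iff, not_nonempty_iff_eq_empty] at hx
    simp [hx] at hy

theorem closure_pathComponentIn_diff_subset {X : Type*} [TopologicalSpace X] {F Z : Set X}
    (hF : IsClosed F) [LocallyPathConnectedSpace ↥(F \ Z)] (x : X) :
    closure (pathComponentIn (F \ Z) x) \ pathComponentIn (F \ Z) x ⊆ Z := by
  rintro y ⟨hy, hyω⟩
  by_contra hyZ
  have hyF : y ∈ F := hF.closure_subset_iff.mpr (pathComponentIn_subset.trans sdiff_subset) hy
  exact hyω (closure_pathComponentIn_inter_subset x ⟨hy, hyF, hyZ⟩)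

theorem exists_pos_rpow_mul_eq {k c d : ℝ} (hk : 0 < k) (hcd : 0 < d / c) :
    ∃ τ : ℝ, 0 < τ ∧ τ ^ k * c = d := by
  have hc : c ≠ 0 := by rintro rfl; simp at hcd
  refine ⟨(d / c) ^ k⁻¹, Real.rpow_pos_of_pos hcd _, ?_⟩
  rw [← Real.rpow_mul hcd.le, inv_mul_cancel₀ hk.ne', Real.rpow_one, div_mul_cancel₀ d hc]

section Homogeneous

variable {B E : Type*} [AddCommGroup E] [Module ℝ E] {k : ℝ} {f : B × E → ℝ}

theorem apply_zero_of_homogeneous (hk : 0 < k)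
    (hhom : ∀ τ : ℝ, 0 < τ → ∀ (b : B) (v : E), f (b, τ • v) = τ ^ k * f (b, v)) (b : B) :
    f (b, 0) = 0 := by
  have h2 : f (b, 0) = 2 ^ k * f (b, 0) := by simpa using hhom 2 two_pos b 0
  have h2k : (1 : ℝ) < 2 ^ k := Real.one_lt_rpow one_lt_two hk
  nlinarith

theorem preimage_fiberScale_levelSet
    (hhom : ∀ τ : ℝ, 0 < τ → ∀ (b : B) (v : E), f (b, τ • v) = τ ^ k * f (b, v))
    {τ : ℝ} (hτ : 0 < τ) (c : ℝ) :
    (fun z : B × E => (z.1, τ • z.2)) ⁻¹' (f ⁻¹' {τ ^ k * c}) = f ⁻¹' {c} := by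
  ext z
  have hτk : τ ^ k ≠ 0 := (Real.rpow_pos_of_pos hτ k).ne'
  simp [hhom τ hτ, hτk]

variable [TopologicalSpace B] [TopologicalSpace E] [ContinuousConstSMul ℝ E]

theorem isClosed_pathComponentIn_levelSet_of_div_pos (hk : 0 < k)
    (hhom : ∀ τ : ℝ, 0 < τ → ∀ (b : B) (v : E), f (b, τ • v) = τ ^ k * f (b, v))
    {c d : ℝ} (hcd : 0 < d / c)
    (hd : ∀ q ∈ f ⁻¹' {d}, IsClosed (pathComponentIn (f ⁻¹' {d}) q))
    {p : B × E} (hp : p ∈ f ⁻¹' {c}) :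
    IsClosed (pathComponentIn (f ⁻¹' {c}) p) := by
  obtain ⟨τ, hτ, rfl⟩ := exists_pos_rpow_mul_eq hk hcd
  let e : B × E ≃ₜ B × E := (Homeomorph.refl B).prodCongr (Homeomorph.smulOfNeZero τ hτ.ne')
  have he : e ⁻¹' (f ⁻¹' {τ ^ k * c}) = f ⁻¹' {c} := preimage_fiberScale_levelSet hhom hτ c
  rw [← he] at hp ⊢
  rw [← e.preimage_pathComponentIn]
  exact (hd (e p) hp).preimage e.continuous

end Homogeneous

theorem homogeneous_partition_limit_points_general
    {B : Type*} [TopologicalSpace B]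
    {m : ℕ} (k : ℝ) (hk : 0 < k)
    (f : B × (Fin m → ℝ) → ℝ) (hf : Continuous f)
    (hhom : ∀ τ : ℝ, 0 < τ → ∀ (b : B) (v : Fin m → ℝ), f (b, τ • v) = τ ^ k * f (b, v))
    (a b : ℝ) (ha : a < 0) (hb : 0 < b)
    (hclosed_a : ∀ p ∈ f ⁻¹' {a}, IsClosed (pathComponentIn (f ⁻¹' {a}) p))
    (hclosed_b : ∀ p ∈ f ⁻¹' {b}, IsClosed (pathComponentIn (f ⁻¹' {b}) p))
    (hlpc : LocallyPathConnectedSpace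
      ↥(f ⁻¹' {0} \ {z : B × (Fin m → ℝ) | z.2 = 0})) :
    (∀ p : B × (Fin m → ℝ), p.2 = 0 →
        closure (pathComponentIn {z : B × (Fin m → ℝ) | z.2 = 0} p)
            \ pathComponentIn {z : B × (Fin m → ℝ) | z.2 = 0} p
          ⊆ {z : B × (Fin m → ℝ) | z.2 = 0})
    ∧ (∀ c : ℝ, ∀ p ∈ f ⁻¹' {c} \ {z : B × (Fin m → ℝ) | z.2 = 0},
        closure (pathComponentIn (f ⁻¹' {c} \ {z : B × (Fin m → ℝ) | z.2 = 0}) p)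
            \ pathComponentIn (f ⁻¹' {c} \ {z : B × (Fin m → ℝ) | z.2 = 0}) p
          ⊆ {z : B × (Fin m → ℝ) | z.2 = 0})
    ∧ (∀ c : ℝ, c ≠ 0 → ∀ p ∈ f ⁻¹' {c}, IsClosed (pathComponentIn (f ⁻¹' {c}) p)) := by
  set Z : Set (B × (Fin m → ℝ)) := {z | z.2 = 0}
  have hZ : IsClosed Z := isClosed_eq continuous_snd continuous_const
  have hclosed : ∀ c : ℝ, c ≠ 0 → ∀ p ∈ f ⁻¹' {c}, IsClosed (pathComponentIn (f ⁻¹' {c}) p) := by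
    intro c hc p hp
    rcases hc.lt_or_gt with hc | hc
    · exact isClosed_pathComponentIn_levelSet_of_div_pos hk hhom (div_pos_of_neg_of_neg ha hc)
        hclosed_a hp
    · exact isClosed_pathComponentIn_levelSet_of_div_pos hk hhom (div_pos hb hc) hclosed_b hp
  refine ⟨fun p _ x hx => hZ.closure_subset_iff.mpr pathComponentIn_subset hx.1, ?_, hclosed⟩
  intro c p hp
  rcases eq_or_ne c 0 with rfl | hc
  · exact closure_pathComponentIn_diff_subset (isClosed_singleton.preimage hf) p
  have hdisj : f ⁻¹' {c} \ Z = f ⁻¹' {c} := by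
    refine sdiff_eq_left.mpr (disjoint_left.mpr fun z hzc hzZ => hc ?_)
    rw [← hzc, ← apply_zero_of_homogeneous hk hhom z.1, ← hzZ]
  rw [hdisj, (hclosed c hc p (hdisj ▸ hp)).closure_eq, Set.sdiff_self]
  exact empty_subset _

/-- For a continuous fiberwise homogeneous function `f : B × ℝᵐ → ℝ` of degree `k > 0` over a
locally path-connected base, if for some `a < 0` and `b > 0` all path components of `f⁻¹(a)`
and `f⁻¹(b)` are closed, and `f⁻¹(0) ∖ (B × {0})` is locally path connected, then every leaf
`ω` of the `(f, B)`-partition satisfies `cl(ω) ∖ ω ⊆ B × {0}`, and for every `c ≠ 0` all path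
components of `f⁻¹(c)` are closed in `B × ℝᵐ`. -/
theorem homogeneous_partition_limit_points
    {B : Type*} [TopologicalSpace B] [LocallyPathConnectedSpace B]
    {m : ℕ} (hm : 1 ≤ m) (k : ℝ) (hk : 0 < k)
    (f : B × (Fin m → ℝ) → ℝ) (hf : Continuous f)
    (hhom : ∀ τ : ℝ, 0 < τ → ∀ (b : B) (v : Fin m → ℝ), f (b, τ • v) = τ ^ k * f (b, v))
    (a b : ℝ) (ha : a < 0) (hb : 0 < b)
    (hclosed_a : ∀ p ∈ f ⁻¹' {a}, IsClosed (pathComponentIn (f ⁻¹' {a}) p))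
    (hclosed_b : ∀ p ∈ f ⁻¹' {b}, IsClosed (pathComponentIn (f ⁻¹' {b}) p))
    (hlpc : LocallyPathConnectedSpace
      ↥(f ⁻¹' {0} \ {z : B × (Fin m → ℝ) | z.2 = 0})) :
    (∀ p : B × (Fin m → ℝ), p.2 = 0 →
        closure (pathComponentIn {z : B × (Fin m → ℝ) | z.2 = 0} p)
            \ pathComponentIn {z : B × (Fin m → ℝ) | z.2 = 0} p
          ⊆ {z : B × (Fin m → ℝ) | z.2 = 0})
    ∧ (∀ c : ℝ, ∀ p ∈ f ⁻¹' {c} \ {z : B × (Fin m → ℝ) | z.2 = 0},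
        closure (pathComponentIn (f ⁻¹' {c} \ {z : B × (Fin m → ℝ) | z.2 = 0}) p)
            \ pathComponentIn (f ⁻¹' {c} \ {z : B × (Fin m → ℝ) | z.2 = 0}) p
          ⊆ {z : B × (Fin m → ℝ) | z.2 = 0})
    ∧ (∀ c : ℝ, c ≠ 0 → ∀ p ∈ f ⁻¹' {c}, IsClosed (pathComponentIn (f ⁻¹' {c}) p)) :=
  homogeneous_partition_limit_points_general k hk f hf hhom a b ha hb hclosed_a hclosed_b hlpc
end

section
/- Let B be a topological space, m ≥ 1 an integer, k > 0 a real number, and f : B × ℝᵐ → ℝ a continuous function that is fiberwise homogeneous of degree k, i.e. f(b, τ·v) = τ^k · f(b, v) for all τ > 0, b ∈ B, v ∈ ℝᵐ. Let h : B × ℝᵐ → B × ℝᵐ be a map which maps every leaf of the (f, B)-partition into itself (i.e. for every point p, h(p) lies in the same leaf as p). Let h' : B × ℝᵐ → B × ℝᵐ be fiberwise linear over a map β : B → B, i.e. h'(b, v) = (β(b), A_b(v)) where each A_b : ℝᵐ → ℝᵐ is linear. If h = h' on some neighborhood W of B × {0} in B × ℝᵐ, then h' also maps every leaf of the (f, B)-partition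 into itself. -/
open Classical

/-- The leaf through `p` of the `(f, B)`-partition of `B × ℝᵐ`: the path component of `p` in
the zero section `B × {0}` if `p` lies on the zero section, and the path component of `p` in
`f⁻¹(f(p)) ∖ (B × {0})` otherwise. -/
noncomputable def leafOf {B : Type*} [TopologicalSpace B] {m : ℕ}
    (f : B × (Fin m → ℝ) → ℝ) (p : B × (Fin m → ℝ)) : Set (B × (Fin m → ℝ)) :=
  if p.2 = 0 then pathComponentIn {z : B × (Fin m → ℝ) | z.2 = 0} p
  else pathComponentIn (f ⁻¹' {f p} \ {z : B × (Fin m → ℝ) | z.2 = 0}) p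

/-
On the zero section `h' = h`. Away from it, the fiberwise dilations `(b, v) ↦ (b, c • v)`,
`c > 0`, map leaves into leaves: they are continuous and, by homogeneity, carry the level set
`f = a` into the level set `f = c ^ k * a`. Given `(b, v)` with `v ≠ 0`, pick `τ > 0` so small
that `(b, τ • v) ∈ W`; there `h' = h` keeps the point in its leaf, and since `h'` commutes with
dilations, dilating back by `τ⁻¹` puts `h' (b, v)` in the leaf of `(b, v)`.
-/

open Filter Set Topology

theorem Continuous.mapsTo_pathComponentIn {X Y : Type*} [TopologicalSpace X]
    [TopologicalSpace Y] {g : X → Y} (hg : Continuous g) {F : Set X} {G : Set Y}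
    (hFG : MapsTo g F G) (x : X) :
    MapsTo g (pathComponentIn F x) (pathComponentIn G (g x)) :=
  fun _ hy => (JoinedIn.map hy hg).mono hFG.image_subset

theorem exists_pos_smul_mem_of_mem_nhds_zero {B E : Type*} [TopologicalSpace B]
    [AddCommGroup E] [Module ℝ E] [TopologicalSpace E] [ContinuousSMul ℝ E]
    {W : Set (B × E)} {b : B} (hW : W ∈ 𝓝 (b, 0)) (v : E) :
    ∃ τ : ℝ, 0 < τ ∧ (b, τ • v) ∈ W := by
  have hcont : Continuous fun τ : ℝ => (b, τ • v) :=
    continuous_const.prodMk (continuous_id.smul continuous_const)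
  have hlim : Tendsto (fun τ : ℝ => (b, τ • v)) (𝓝[>] 0) (𝓝 (b, 0)) :=
    (hcont.tendsto' 0 _ (by simp)).mono_left nhdsWithin_le_nhds
  obtain ⟨τ, hτW, hτ⟩ := (hlim.eventually hW |>.and self_mem_nhdsWithin).exists
  exact ⟨τ, hτ, hτW⟩

theorem mapsTo_smul_levelSet_diff_zeroSection {B E : Type*} [AddCommGroup E] [Module ℝ E]
    {k : ℝ} {f : B × E → ℝ}
    (hhom : ∀ τ : ℝ, 0 < τ → ∀ (b : B) (v : E), f (b, τ • v) = τ ^ k * f (b, v))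
    {c : ℝ} (hc : 0 < c) (a : ℝ) :
    MapsTo (fun z : B × E => (z.1, c • z.2)) (f ⁻¹' {a} \ {z | z.2 = 0})
      (f ⁻¹' {c ^ k * a} \ {z | z.2 = 0}) := by
  rintro ⟨b, v⟩ ⟨hfa, hv⟩
  refine ⟨?_, smul_ne_zero hc.ne' hv⟩
  simp only [mem_preimage, mem_singleton_iff] at hfa ⊢
  rw [hhom c hc, hfa]

theorem smul_mem_leafOf {B : Type*} [TopologicalSpace B] {m : ℕ} {k : ℝ}
    {f : B × (Fin m → ℝ) → ℝ}
    (hhom : ∀ τ : ℝ, 0 < τ → ∀ (b : B) (v : Fin m → ℝ), f (b, τ • v) = τ ^ k * f (b, v))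
    {c : ℝ} (hc : 0 < c) {p q : B × (Fin m → ℝ)} (hp : p.2 ≠ 0) (hq : q ∈ leafOf f p) :
    (q.1, c • q.2) ∈ leafOf f (p.1, c • p.2) := by
  have hcp : c • p.2 ≠ 0 := smul_ne_zero hc.ne' hp
  rw [leafOf, if_neg hp] at hq
  rw [leafOf, if_neg hcp, hhom c hc, Prod.mk.eta]
  exact (continuous_fst.prodMk (continuous_snd.const_smul c)).mapsTo_pathComponentIn
    (mapsTo_smul_levelSet_diff_zeroSection hhom hc (f p)) p hq

theorem fiberwise_linear_map_preserves_leaves_general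
    {B : Type*} [TopologicalSpace B] {m : ℕ} (k : ℝ)
    (f : B × (Fin m → ℝ) → ℝ)
    (hhom : ∀ τ : ℝ, 0 < τ → ∀ (b : B) (v : Fin m → ℝ), f (b, τ • v) = τ ^ k * f (b, v))
    (h h' : B × (Fin m → ℝ) → B × (Fin m → ℝ))
    (hleaf : ∀ p : B × (Fin m → ℝ), h p ∈ leafOf f p)
    (β : B → B) (A : B → (Fin m → ℝ) →ₗ[ℝ] (Fin m → ℝ))
    (hlin : ∀ z : B × (Fin m → ℝ), h' z = (β z.1, A z.1 z.2))
    (W : Set (B × (Fin m → ℝ)))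
    (hW : ∀ p : B × (Fin m → ℝ), p.2 = 0 → W ∈ nhds p)
    (hhh' : ∀ z ∈ W, h z = h' z) :
    ∀ p : B × (Fin m → ℝ), h' p ∈ leafOf f p := by
  rintro ⟨b, v⟩
  by_cases hv : v = 0
  · subst hv
    rw [← hhh' _ (mem_of_mem_nhds (hW _ rfl))]
    exact hleaf _
  obtain ⟨τ, hτ, hτW⟩ := exists_pos_smul_mem_of_mem_nhds_zero (hW (b, 0) rfl) v
  have hleafτ : (β b, τ • A b v) ∈ leafOf f (b, τ • v) := by
    simpa [hhh' _ hτW, hlin] using hleaf (b, τ • v)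
  have hback := smul_mem_leafOf hhom (inv_pos.2 hτ) (smul_ne_zero hτ.ne' hv) hleafτ
  simpa only [inv_smul_smul₀ hτ.ne', hlin] using hback

/-- If a map `h` preserves each leaf of the partition by path components of level sets of a
continuous fiberwise homogeneous function `f` of degree `k > 0`, and `h` coincides near the
zero section with a fiberwise linear map `h'` over some `β : B → B`, then `h'` also preserves
each leaf. -/
theorem fiberwise_linear_map_preserves_leaves
    {B : Type*} [TopologicalSpace B] {m : ℕ} (hm : 1 ≤ m) (k : ℝ) (hk : 0 < k)
    (f : B × (Fin m → ℝ) → ℝ) (hf : Continuous f)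
    (hhom : ∀ τ : ℝ, 0 < τ → ∀ (b : B) (v : Fin m → ℝ), f (b, τ • v) = τ ^ k * f (b, v))
    (h h' : B × (Fin m → ℝ) → B × (Fin m → ℝ))
    (hleaf : ∀ p : B × (Fin m → ℝ), h p ∈ leafOf f p)
    (β : B → B) (A : B → (Fin m → ℝ) →ₗ[ℝ] (Fin m → ℝ))
    (hlin : ∀ z : B × (Fin m → ℝ), h' z = (β z.1, A z.1 z.2))
    (W : Set (B × (Fin m → ℝ)))
    (hW : ∀ p : B × (Fin m → ℝ), p.2 = 0 → W ∈ nhds p)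
    (hhh' : ∀ z ∈ W, h z = h' z) :
    ∀ p : B × (Fin m → ℝ), h' p ∈ leafOf f p :=
  fiberwise_linear_map_preserves_leaves_general k f hhom h h' hleaf β A hlin W hW hhh'
end

section
/- Let g : ℝ² → ℝ be the homogeneous polynomial g(u, v) = u·v. A linear automorphism A of ℝ² maps every path component of every set g⁻¹(c) ∖ {(0,0)} (c ∈ ℝ) into itself if and only if A = diag(t, 1/t) for some t > 0, i.e. A(u, v) = (t·u, v/t). (The path components in question are the four open half-axes for c = 0 and the hyperbola branches {uv = c, u > 0} and {uv = c, u < 0} for c ≠ 0.) -/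
/-!
A continuous function without zeros on a set has constant sign on each path component of it.
Applied to `u - |v|` and `v - |u|` on the punctured level set `uv = 0`, this pins the path
components of `(1, 0)` and `(0, 1)` to the open positive half-axes, so a leaf-preserving `A`
is diagonal with positive entries `a, d`; sending `(1, 1)` into `uv = 1` forces `a d = 1`.
Conversely, `s ↦ (eˢ u, e⁻ˢ v)` runs inside each level set, so `diag(t, 1/t)` moves every point
within its own path component.
-/

def puncturedLevel (c : ℝ) : Set (ℝ × ℝ) := {z | z.1 * z.2 = c} \ {0}

lemma pos_of_mem_pathComponentIn {X α : Type*} [TopologicalSpace X] [LinearOrder α] [Zero α]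
    [TopologicalSpace α] [OrderClosedTopology α] {F : Set X} {f : X → α}
    (hf : ContinuousOn f F) (hf0 : ∀ z ∈ F, f z ≠ 0) {x y : X}
    (hy : y ∈ pathComponentIn F x) (hx : 0 < f x) : 0 < f y := by
  by_contra! hfy
  have hxF : x ∈ F := hy.source_mem
  have hconn := (isPathConnected_pathComponentIn hxF).isConnected.isPreconnected
  obtain ⟨z, hz, hfz⟩ := hconn.intermediate_value hy (mem_pathComponentIn_self hxF)
    (hf.mono pathComponentIn_subset) ⟨hfy, hx.le⟩
  exact hf0 z (pathComponentIn_subset hz) hfz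

lemma sub_abs_ne_zero_of_mul_eq_zero {a b : ℝ} (hab : a * b = 0) (hne : (a, b) ≠ 0) :
    a - |b| ≠ 0 := by
  intro h
  rcases mul_eq_zero.mp hab with ha | hb
  · exact hne (Prod.ext ha (abs_eq_zero.mp (by linarith)))
  · exact hne (Prod.ext (by simpa [hb] using h) hb)

lemma exists_pos_uAxis_of_mem_pathComponentIn {z : ℝ × ℝ}
    (hz : z ∈ pathComponentIn (puncturedLevel 0) (1, 0)) : ∃ a, 0 < a ∧ z = (a, 0) := by
  have hpos : 0 < z.1 - |z.2| :=
    pos_of_mem_pathComponentIn (by fun_prop)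
      (fun w hw => sub_abs_ne_zero_of_mul_eq_zero hw.1 hw.2) hz (by norm_num)
  have hz1 : 0 < z.1 := by linarith [abs_nonneg z.2]
  exact ⟨z.1, hz1,
    Prod.ext rfl ((mul_eq_zero.mp (pathComponentIn_subset hz).1).resolve_left hz1.ne')⟩

lemma exists_pos_vAxis_of_mem_pathComponentIn {z : ℝ × ℝ}
    (hz : z ∈ pathComponentIn (puncturedLevel 0) (0, 1)) : ∃ d, 0 < d ∧ z = (0, d) := by
  have hpos : 0 < z.2 - |z.1| :=
    pos_of_mem_pathComponentIn (by fun_prop)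
      (fun w hw => sub_abs_ne_zero_of_mul_eq_zero (by rw [mul_comm]; exact hw.1)
        (fun h => hw.2 (Prod.ext (congrArg Prod.snd h) (congrArg Prod.fst h)))) hz (by norm_num)
  have hz2 : 0 < z.2 := by linarith [abs_nonneg z.1]
  exact ⟨z.2, hz2,
    Prod.ext ((mul_eq_zero.mp (pathComponentIn_subset hz).1).resolve_right hz2.ne') rfl⟩

lemma scale_mem_puncturedLevel {c t : ℝ} (ht : t ≠ 0) {z : ℝ × ℝ} (hz : z ∈ puncturedLevel c) :
    (t * z.1, z.2 / t) ∈ puncturedLevel c := by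
  refine ⟨show t * z.1 * (z.2 / t) = c by rw [← hz.1]; field_simp,
    fun h => hz.2 (Prod.ext ?_ ?_)⟩
  · simpa [ht] using congrArg Prod.fst h
  · simpa [ht] using congrArg Prod.snd h

lemma joinedIn_scale {c t : ℝ} (ht : 0 < t) {z : ℝ × ℝ} (hz : z ∈ puncturedLevel c) :
    JoinedIn (puncturedLevel c) z (t * z.1, z.2 / t) := by
  refine JoinedIn.ofLine (f := fun s => (Real.exp (s * Real.log t) * z.1,
    z.2 / Real.exp (s * Real.log t))) ?_ (by simp) (by simp [Real.exp_log ht]) ?_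
  · exact Continuous.continuousOn
      (by fun_prop (disch := exact fun s => (Real.exp_pos _).ne'))
  · rintro _ ⟨s, -, rfl⟩
    exact scale_mem_puncturedLevel (Real.exp_pos _).ne' hz

lemma LinearMap.apply_mk_eq_of_diagonal {R : Type*} [CommSemiring R] (f : R × R →ₗ[R] R × R)
    {a d : R} (h₁ : f (1, 0) = (a, 0)) (h₂ : f (0, 1) = (0, d)) (u v : R) :
    f (u, v) = (a * u, d * v) := by
  have huv : ((u, v) : R × R) = u • (1, 0) + v • (0, 1) := by simp
  rw [huv, map_add, map_smul, map_smul, h₁, h₂]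
  simp [mul_comm]

/-- For `g(u, v) = u·v` on `ℝ²`, a linear automorphism `A` maps every path component of every
set `g⁻¹(c) ∖ {0}` into itself if and only if `A = diag(t, 1/t)` for some `t > 0`. -/
theorem leaf_preserving_linear_automorphisms_of_uv
    (A : (ℝ × ℝ) ≃ₗ[ℝ] (ℝ × ℝ)) :
    (∀ c : ℝ, ∀ p ∈ ({z : ℝ × ℝ | z.1 * z.2 = c} \ {0}),
        (fun z => A z) '' pathComponentIn ({z : ℝ × ℝ | z.1 * z.2 = c} \ {0}) p
          ⊆ pathComponentIn ({z : ℝ × ℝ | z.1 * z.2 = c} \ {0}) p)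
      ↔ ∃ t : ℝ, 0 < t ∧ ∀ u v : ℝ, A (u, v) = (t * u, v / t) := by
  constructor
  · intro h
    have hA : ∀ c, ∀ p ∈ puncturedLevel c, A p ∈ pathComponentIn (puncturedLevel c) p :=
      fun c p hp => h c p hp ⟨p, mem_pathComponentIn_self hp, rfl⟩
    obtain ⟨a, ha, h₁⟩ :=
      exists_pos_uAxis_of_mem_pathComponentIn (hA 0 (1, 0) (by simp [puncturedLevel]))
    obtain ⟨d, -, h₂⟩ :=
      exists_pos_vAxis_of_mem_pathComponentIn (hA 0 (0, 1) (by simp [puncturedLevel]))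
    have hdiag := (A : ℝ × ℝ →ₗ[ℝ] ℝ × ℝ).apply_mk_eq_of_diagonal h₁ h₂
    rw [LinearEquiv.coe_coe] at hdiag
    have had : a * d = 1 := by
      simpa [hdiag] using (pathComponentIn_subset (hA 1 (1, 1) (by simp [puncturedLevel]))).1
    refine ⟨a, ha, fun u v => ?_⟩
    rw [hdiag, eq_one_div_of_mul_eq_one_right had, one_div_mul_eq_div]
  · rintro ⟨t, ht, hA⟩ c p - _ ⟨q, hq, rfl⟩
    show A q ∈ _
    rw [show A q = (t * q.1, q.2 / t) from hA q.1 q.2]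
    exact hq.trans (joinedIn_scale ht hq.target_mem)
end

section
/- Let G and H be topological groups, φ : G → H a continuous group homomorphism with kernel K, admitting a continuous local section s : U → G on an open neighborhood U of the identity of H. Then φ : G → φ(G) is a locally trivial principal K-fibration: for every g ∈ G there exist an open set V ⊆ H containing φ(g) and a homeomorphism Ψ : V × K → φ⁻¹(V) such that φ(Ψ(y, k)) = y for all y ∈ V and k ∈ K (one may take V = φ(g)·U and Ψ(y, k) = g · s(φ(g)⁻¹ · y) · k). -/
/-!
Left translation by `g` turns the local section `s` into a continuous section `σ` of `φ` over
`V = φ(g) • U`. Any continuous section over `V` trivializes `φ` there: `(y, k) ↦ σ(y) k` has the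
continuous inverse `x ↦ (φ x, σ(φ x)⁻¹ x)`.
-/

open Pointwise

namespace MonoidHom

section Trivialization

variable {G H : Type*} [Group G] [Group H] (φ : G →* H) {V : Set H} (σ : V → G)

lemma section_mul_ker_mem_preimage (hσφ : ∀ y, φ (σ y) = y) (y : V) (k : φ.ker) :
    σ y * k ∈ φ ⁻¹' V := by
  simp [hσφ, (mem_ker.mp k.2 : φ k = 1)]

lemma inv_section_mul_mem_ker (hσφ : ∀ y, φ (σ y) = y) (x : φ ⁻¹' V) :
    (σ ⟨φ x, x.2⟩)⁻¹ * x ∈ φ.ker := by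
  simp [mem_ker, hσφ]

variable [TopologicalSpace G] [IsTopologicalGroup G] [TopologicalSpace H]

def homeomorphProdKerOfSection (hφ : Continuous φ) (hσ : Continuous σ)
    (hσφ : ∀ y, φ (σ y) = y) : V × φ.ker ≃ₜ φ ⁻¹' V where
  toFun p := ⟨σ p.1 * p.2, section_mul_ker_mem_preimage φ σ hσφ p.1 p.2⟩
  invFun x := (⟨φ x, x.2⟩, ⟨(σ ⟨φ x, x.2⟩)⁻¹ * x, inv_section_mul_mem_ker φ σ hσφ x⟩)
  left_inv := by
    rintro ⟨y, k⟩
    have hy : (⟨φ (σ y * k), section_mul_ker_mem_preimage φ σ hσφ y k⟩ : V) = y :=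
      Subtype.ext (by simp [hσφ, (mem_ker.mp k.2 : φ k = 1)])
    ext
    · exact congrArg Subtype.val hy
    · simp only [hy, inv_mul_cancel_left]
  right_inv x := Subtype.ext (mul_inv_cancel_left _ _)
  continuous_toFun := by fun_prop
  continuous_invFun := by
    have hbase : Continuous fun x : φ ⁻¹' V => (⟨φ x, x.2⟩ : V) := by fun_prop
    exact hbase.prodMk (((hσ.comp hbase).inv.mul continuous_subtype_val).subtype_mk _)

lemma apply_homeomorphProdKerOfSection (hφ : Continuous φ) (hσ : Continuous σ)
    (hσφ : ∀ y, φ (σ y) = y) (y : V) (k : φ.ker) :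
    φ (homeomorphProdKerOfSection φ σ hφ hσ hσφ (y, k)) = y := by
  simp [homeomorphProdKerOfSection, hσφ, (mem_ker.mp k.2 : φ k = 1)]

end Trivialization

lemma exists_continuous_section_on_smul {G H : Type*} [Group G] [TopologicalSpace G]
    [IsTopologicalGroup G] [Group H] [TopologicalSpace H] [IsTopologicalGroup H]
    (φ : G →* H) {U : Set H} (s : U → G) (hs : Continuous s) (hsec : ∀ u, φ (s u) = u) (g : G) :
    ∃ σ : (φ g • U : Set H) → G, Continuous σ ∧ ∀ y, φ (σ y) = y := by
  have hmem (y : (φ g • U : Set H)) : (φ g)⁻¹ • (y : H) ∈ U :=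
    Set.mem_smul_set_iff_inv_smul_mem.mp y.2
  refine ⟨fun y => g * s ⟨(φ g)⁻¹ • (y : H), hmem y⟩, ?_, fun y => ?_⟩
  · exact continuous_const.mul
      (hs.comp (((continuous_const_smul _).comp continuous_subtype_val).subtype_mk _))
  · simp [hsec, smul_eq_mul]

end MonoidHom

/-- A continuous homomorphism `φ : G → H` of topological groups admitting a continuous local
section on an open neighborhood of the identity of `H` is a locally trivial principal
`ker φ`-fibration over its image: every `g ∈ G` has an open set `V ⊆ H` with `φ(g) ∈ V` and a
homeomorphism `Ψ : V × ker φ ≃ₜ φ⁻¹(V)` such that `φ(Ψ(y, k)) = y`. -/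
theorem hom_with_local_section_is_locally_trivial_fibration
    {G H : Type*} [Group G] [TopologicalSpace G] [IsTopologicalGroup G]
    [Group H] [TopologicalSpace H] [IsTopologicalGroup H]
    (φ : G →* H) (hφ : Continuous φ)
    (U : Set H) (hU : IsOpen U) (h1U : (1 : H) ∈ U)
    (s : U → G) (hs : Continuous s) (hsec : ∀ u : U, φ (s u) = (u : H)) :
    ∀ g : G, ∃ V : Set H, IsOpen V ∧ φ g ∈ V ∧
      ∃ Ψ : (↥V × ↥(MonoidHom.ker φ)) ≃ₜ ↥(φ ⁻¹' V),
        ∀ (y : ↥V) (k : ↥(MonoidHom.ker φ)), φ ((Ψ (y, k) : G)) = (y : H) := by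
  intro g
  obtain ⟨σ, hσ, hσφ⟩ := φ.exists_continuous_section_on_smul s hs hsec g
  have hgV : φ g ∈ φ g • U := by simpa using Set.smul_mem_smul_set (a := φ g) h1U
  exact ⟨φ g • U, hU.smul _, hgV, φ.homeomorphProdKerOfSection σ hφ hσ hσφ,
    φ.apply_homeomorphProdKerOfSection σ hφ hσ hσφ⟩
end

section
/- Let B be a compact, connected, locally path-connected Hausdorff space and x₀ ∈ B. Consider the space C(B, S¹) of continuous maps from B to the circle group S¹ = {z ∈ ℂ : |z| = 1}, with the compact-open topology (a topological group under pointwise multiplication). Let C₀ denote the path component of the constant map 1 in C(B, S¹). Then C₀ is homeomorphic to K̂ × S¹, where K̂ = {g ∈ C(B, ℝ) : g(x₀) = 0} carries the compact-open topology. (Explicitly, (g, z) ↦ the map x ↦ z·exp(2πi·g(x)) is a homeomorphism K̂ × S¹ → C₀.) -/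
/-!
The map `(g, z) ↦ z · exp(2πi g)` is continuous and its domain is path connected, so it lands
in `C₀`. Every map avoiding `-1` lifts through `exp` via `arg`, so the maps admitting a lift form
an open, hence clopen, subgroup containing `C₀`; normalising a lift at `x₀` puts every element of
`C₀` in the image. If `exp ∘ d → 1` with `d x₀ = 0`, then eventually `exp ∘ d` avoids `-1`, so by
connectedness `|d| < π` and `d = arg ∘ exp ∘ d → 0`: the map is inducing, hence (its domain
being Hausdorff) an embedding.
-/

open Complex Real Set Filter Topology

namespace Circle

lemma continuousOn_arg_centeredArc : ContinuousOn (fun z : Circle ↦ arg z) (centeredArc π) := by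
  intro z hz
  refine (continuousAt_arg ?_).comp continuous_subtype_val.continuousAt |>.continuousWithinAt
  rw [mem_centeredArc le_rfl] at hz
  exact mem_slitPlane_iff_arg.2 ⟨(abs_lt.1 hz).2.ne, z.coe_ne_zero⟩

lemma exp_notMem_centeredArc_of_abs_eq_pi {t : ℝ} (ht : |t| = π) : exp t ∉ centeredArc π := by
  have hπ : exp π = exp (-π) := by rw [← exp_sub_two_pi]; ring_nf
  have : exp t = exp π := by
    rcases (abs_eq pi_nonneg).1 ht with h | h <;> rw [h]
    exact hπ.symm
  rw [this, mem_centeredArc le_rfl, arg_exp (by linarith [pi_pos]) le_rfl, abs_of_pos pi_pos]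
  exact lt_irrefl π

end Circle

namespace ContinuousMap

variable {X : Type*} [TopologicalSpace X]

lemma exists_exp_comp_eq {f : C(X, Circle)} (hf : range f ⊆ Circle.centeredArc π) :
    ∃ g : C(X, ℝ), Circle.exp.comp g = f :=
  ⟨⟨fun x ↦ arg (f x), Circle.continuousOn_arg_centeredArc.comp_continuous f.continuous
    fun x ↦ hf (mem_range_self x)⟩, by ext x; simp⟩

lemma abs_lt_pi_of_range_exp_comp_subset [PreconnectedSpace X] {g : C(X, ℝ)} {x₀ : X}
    (h₀ : g x₀ = 0) (hg : range (Circle.exp.comp g) ⊆ Circle.centeredArc π) (x : X) :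
    |g x| < π := by
  by_contra! hx
  obtain ⟨y, hy⟩ : π ∈ range fun x ↦ |g x| :=
    intermediate_value_univ x₀ x (continuous_abs.comp g.continuous) ⟨by simp [h₀, pi_nonneg], hx⟩
  exact Circle.exp_notMem_centeredArc_of_abs_eq_pi hy (hg (mem_range_self y))

lemma range_one_subset_centeredArc : range (1 : C(X, Circle)) ⊆ Circle.centeredArc π := by
  rintro _ ⟨x, rfl⟩
  exact ⟨0, by simp [pi_pos], Circle.exp_zero⟩

lemma tendsto_nhds_zero_of_tendsto_exp_comp [CompactSpace X] [PreconnectedSpace X] {ι : Type*}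
    {l : Filter ι} {x₀ : X} {d : ι → C(X, ℝ)} (hd : ∀ i, d i x₀ = 0)
    (h : Tendsto (fun i ↦ Circle.exp.comp (d i)) l (𝓝 1)) : Tendsto d l (𝓝 0) := by
  rw [tendsto_nhds_compactOpen]
  intro K hK U hU hKU
  have hV : IsOpen (Circle.centeredArc π ∩ (fun z : Circle ↦ arg z) ⁻¹' U) :=
    Circle.continuousOn_arg_centeredArc.isOpen_inter_preimage (Circle.isOpen_centeredArc π) hU
  have h₁ := range_one_subset_centeredArc (X := X)
  filter_upwards [h.eventually (eventually_range_subset (Circle.isOpen_centeredArc π) h₁),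
    tendsto_nhds_compactOpen.1 h K hK _ hV
      fun x hx ↦ ⟨h₁ (mem_range_self x), by simpa using hKU hx⟩] with i hi hiK x hx
  obtain ⟨hlt, hgt⟩ := abs_lt.1 (abs_lt_pi_of_range_exp_comp_subset (hd i) hi x)
  have hdx := (hiK hx).2
  rwa [mem_preimage, comp_apply, Circle.arg_exp hlt hgt.le] at hdx

variable (X) in
def rangeExpComp : Subgroup C(X, Circle) where
  carrier := {f | ∃ g : C(X, ℝ), Circle.exp.comp g = f}
  mul_mem' := by
    rintro _ _ ⟨g₁, rfl⟩ ⟨g₂, rfl⟩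
    exact ⟨g₁ + g₂, by ext x; simp [Circle.exp_add]⟩
  one_mem' := ⟨0, by ext x; simp⟩
  inv_mem' := by
    rintro _ ⟨g, rfl⟩
    exact ⟨-g, by ext x; simp⟩

lemma isOpen_rangeExpComp [CompactSpace X] : IsOpen (rangeExpComp X : Set C(X, Circle)) := by
  refine Subgroup.isOpen_of_mem_nhds _ (g := 1) ?_
  filter_upwards [eventually_range_subset (Circle.isOpen_centeredArc π)
    range_one_subset_centeredArc] using fun f hf ↦ exists_exp_comp_eq hf

lemma pathComponent_one_subset_rangeExpComp [CompactSpace X] :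
    pathComponent (1 : C(X, Circle)) ⊆ rangeExpComp X :=
  (pathComponent_subset_component 1).trans <|
    IsClopen.connectedComponent_subset
      ⟨Subgroup.isClosed_of_isOpen _ isOpen_rangeExpComp, isOpen_rangeExpComp⟩ (one_mem _)

noncomputable def circleParam (x₀ : X) (p : {g : C(X, ℝ) // g x₀ = 0} × Circle) : C(X, Circle) :=
  const X p.2 * Circle.exp.comp ((2 * π) • p.1.1)

lemma circleParam_apply (x₀ : X) (p : {g : C(X, ℝ) // g x₀ = 0} × Circle) (x : X) :
    circleParam x₀ p x = p.2 * Circle.exp (2 * π * p.1.1 x) :=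
  rfl

lemma continuous_circleParam (x₀ : X) : Continuous (circleParam x₀) :=
  (continuous_const'.comp continuous_snd).mul <| (continuous_postcomp _).comp <|
    (continuous_const_smul _).comp (continuous_subtype_val.comp continuous_fst)

lemma isInducing_circleParam [CompactSpace X] [PreconnectedSpace X] (x₀ : X) :
    IsInducing (circleParam x₀) := by
  refine isInducing_iff_nhds.2 fun p ↦
    le_antisymm ((continuous_circleParam x₀).tendsto p).le_comap ?_
  set l := comap (circleParam x₀) (𝓝 (circleParam x₀ p))
  have hparam : Tendsto (circleParam x₀) l (𝓝 (circleParam x₀ p)) := tendsto_comap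
  have hsnd : Tendsto Prod.snd l (𝓝 p.2) := by
    have hbase (q : {g : C(X, ℝ) // g x₀ = 0} × Circle) : circleParam x₀ q x₀ = q.2 := by
      simp [circleParam_apply, q.1.2]
    simpa [Function.comp_def, hbase] using ((continuous_eval_const x₀).tendsto _).comp hparam
  have hexp : Tendsto (fun q ↦ Circle.exp.comp ((2 * π) • (q.1.1 - p.1.1))) l (𝓝 1) := by
    -- the function is `circleParam x₀ q * (circleParam x₀ p)⁻¹ * const X (p.2 * q.2⁻¹)`
    have := (hparam.mul_const (circleParam x₀ p)⁻¹).mul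
      ((continuous_const'.tendsto _).comp (hsnd.inv.const_mul p.2))
    convert this using 1
    · ext q x
      simp [circleParam_apply, mul_sub, Circle.exp_sub]
      field_simp
    · simp
  have hfst : Tendsto (fun q ↦ q.1.1) l (𝓝 p.1.1) := by
    have := tendsto_nhds_zero_of_tendsto_exp_comp (x₀ := x₀) (fun q ↦ by simp [q.1.2, p.1.2]) hexp
    simpa only [inv_smul_smul₀ two_pi_pos.ne', add_sub_cancel, smul_zero, add_zero] using
      (this.const_smul (2 * π)⁻¹).const_add p.1.1
  exact (tendsto_subtype_rng.2 hfst).prodMk_nhds hsnd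

instance (x₀ : X) : PathConnectedSpace {g : C(X, ℝ) // g x₀ = 0} :=
  isPathConnected_iff_pathConnectedSpace.1 <|
    (show Convex ℝ {g : C(X, ℝ) | g x₀ = 0} from fun g hg h hh a b _ _ _ ↦ by
      simp_all).isPathConnected ⟨0, rfl⟩

lemma range_circleParam [CompactSpace X] (x₀ : X) :
    range (circleParam x₀) = pathComponent 1 := by
  refine (isPathConnected_range (continuous_circleParam x₀)).subset_pathComponent
    ⟨(⟨0, rfl⟩, 1), ContinuousMap.ext fun x ↦ by simp [circleParam_apply]⟩ |>.antisymm ?_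
  intro f hf
  obtain ⟨g, rfl⟩ := pathComponent_one_subset_rangeExpComp hf
  refine ⟨(⟨(2 * π)⁻¹ • (g - const X (g x₀)), by simp⟩, Circle.exp (g x₀)),
    ContinuousMap.ext fun x ↦ ?_⟩
  simp only [circleParam_apply, smul_apply, sub_apply, const_apply, smul_eq_mul,
    mul_inv_cancel_left₀ two_pi_pos.ne', ← Circle.exp_add, add_sub_cancel, comp_apply]

end ContinuousMap

theorem path_component_of_circle_maps_general
    {B : Type*} [TopologicalSpace B] [CompactSpace B] [ConnectedSpace B] (x₀ : B) :
    ∃ e : ({g : C(B, ℝ) // g x₀ = 0} × Circle) ≃ₜ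
        ↥(pathComponent (1 : C(B, Circle))),
      ∀ (g : {g : C(B, ℝ) // g x₀ = 0}) (z : Circle) (x : B),
        ((e (g, z) : C(B, Circle)) : C(B, Circle)) x =
          z * Circle.exp (2 * Real.pi * (g : C(B, ℝ)) x) :=
  ⟨(ContinuousMap.isInducing_circleParam x₀).isEmbedding.toHomeomorph.trans
    (Homeomorph.setCongr (ContinuousMap.range_circleParam x₀)), fun _ _ _ ↦ rfl⟩

/-- For a compact, connected, locally path-connected Hausdorff space `B` with base point `x₀`,
the path component `C₀` of the constant map `1` in `C(B, S¹)` (compact-open topology) is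
homeomorphic to `K̂ × S¹`, where `K̂ = {g ∈ C(B, ℝ) : g(x₀) = 0}`, via
`(g, z) ↦ (x ↦ z · exp(2πi·g(x)))`. -/
theorem path_component_of_circle_maps
    {B : Type*} [TopologicalSpace B] [CompactSpace B] [ConnectedSpace B]
    [LocallyPathConnectedSpace B] [T2Space B] (x₀ : B) :
    ∃ e : ({g : C(B, ℝ) // g x₀ = 0} × Circle) ≃ₜ
        ↥(pathComponent (1 : C(B, Circle))),
      ∀ (g : {g : C(B, ℝ) // g x₀ = 0}) (z : Circle) (x : B),
        ((e (g, z) : C(B, Circle)) : C(B, Circle)) x =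
          z * Circle.exp (2 * Real.pi * (g : C(B, ℝ)) x) :=
  path_component_of_circle_maps_general x₀
end
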